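/- arXiv:2404.01597 — 6 statements merged into one kernel-verified Lean document; each statement's English description precedes it below -/
import Mathlib

section
/- Let π be a permutation of [n] with π(n) = 1. Then π and π² both avoid the pattern 312 if and only if there exists k with k ≥ n/2 such that π = (k+1)(k+2)⋯n k(k−1)⋯1 in one-line notation, i.e., π(i) = k+i for 1 ≤ i ≤ n−k and π(i) = n+1−i for n−k < i ≤ n. -/
open Equiv Finset

def Avoids312 {n : ℕ} (π : Equiv.Perm (Fin n)) : Prop :=
  ¬ ∃ i j l : Fin n, i < j ∧ j < l ∧ π j < π l ∧ π l < π i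

private lemma no312 {n : ℕ} {σ : Equiv.Perm (Fin n)} (H : Avoids312 σ) {i j l : Fin n}
    (h1 : (i:ℕ) < j) (h2 : (j:ℕ) < l) (h3 : (σ j : ℕ) < σ l) (h4 : (σ l : ℕ) < σ i) : False :=
  H ⟨i, j, l, Fin.lt_def.mpr h1, Fin.lt_def.mpr h2, Fin.lt_def.mpr h3, Fin.lt_def.mpr h4⟩

private lemma pinj {n : ℕ} (π : Equiv.Perm (Fin n)) {i j : Fin n} (h : (π i : ℕ) = π j) :
    (i:ℕ) = j :=
  congrArg Fin.val (π.injective (Fin.val_injective h))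


private lemma fin_card_filter {n : ℕ} (a b : ℕ) (hb : b < n) :
    ((Finset.univ : Finset (Fin n)).filter (fun v : Fin n => a ≤ (v:ℕ) ∧ (v:ℕ) ≤ b)).card
      = b + 1 - a := by
  have h1 : ((Finset.univ : Finset (Fin n)).filter
        (fun v : Fin n => a ≤ (v:ℕ) ∧ (v:ℕ) ≤ b)).image Fin.val
      = (Finset.range n).filter (fun v => a ≤ v ∧ v ≤ b) := by
    ext x
    simp only [Finset.mem_image, Finset.mem_filter, Finset.mem_univ, true_and, Finset.mem_range]
    constructor
    · rintro ⟨v, hv, rfl⟩; exact ⟨v.isLt, hv⟩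
    · rintro ⟨hx, hax⟩; exact ⟨⟨x, hx⟩, hax, rfl⟩
  have h2 : (Finset.range n).filter (fun v => a ≤ v ∧ v ≤ b) = Finset.Icc a b := by
    ext x
    simp only [Finset.mem_filter, Finset.mem_range, Finset.mem_Icc]
    omega
  have h3 := Finset.card_image_of_injective
    ((Finset.univ : Finset (Fin n)).filter (fun v : Fin n => a ≤ (v:ℕ) ∧ (v:ℕ) ≤ b))
    (Fin.val_injective)
  rw [h1, h2] at h3
  rw [← h3, Nat.card_Icc]

private lemma pigeon {n : ℕ} (f : Equiv.Perm (Fin n)) (a1 b1 a2 b2 : ℕ)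
    (hb1 : b1 < n) (hb2 : b2 < n)
    (H : ∀ v : Fin n, a1 ≤ (v:ℕ) → (v:ℕ) ≤ b1 → a2 ≤ (f v : ℕ) ∧ (f v : ℕ) ≤ b2) :
    b1 + 1 - a1 ≤ b2 + 1 - a2 := by
  rw [← fin_card_filter a1 b1 hb1, ← fin_card_filter (n := n) a2 b2 hb2]
  apply Finset.card_le_card_of_injOn f
  · intro v hv
    simp only [Finset.mem_coe, Finset.mem_filter, Finset.mem_univ, true_and] at hv ⊢
    exact H v hv.1 hv.2
  · intro x _ y _ h
    exact f.injective h

theorem stmt4 (n : ℕ) (hn : 0 < n) (π : Equiv.Perm (Fin n))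
    (hπ : π ⟨n - 1, by omega⟩ = ⟨0, hn⟩) :
    (Avoids312 π ∧ Avoids312 (π * π)) ↔
      ∃ k : ℕ, n ≤ 2 * k ∧ k ≤ n ∧ ∀ i : Fin n,
        ((i : ℕ) < n - k → (π i : ℕ) = k + i) ∧
        (n - k ≤ (i : ℕ) → (π i : ℕ) = n - 1 - i) := by
  constructor
  · rintro ⟨H1, H2⟩
    obtain ⟨N1, hvN1⟩ : ∃ x : Fin n, (x:ℕ) = n - 1 := ⟨⟨n-1, by omega⟩, rfl⟩
    obtain ⟨z, hvz⟩ : ∃ x : Fin n, (x:ℕ) = 0 := ⟨⟨0, hn⟩, rfl⟩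
    have hπN1 : (π N1 : ℕ) = 0 := by
      have e : N1 = ⟨n-1, by omega⟩ := Fin.val_injective hvN1
      rw [e, hπ]
    have hπN1' : π N1 = z := Fin.val_injective (by omega)
    obtain ⟨q, hq⟩ : ∃ x : Fin n, π x = N1 := ⟨π⁻¹ N1, π.apply_symm_apply N1⟩
    have hqv : (π q : ℕ) = n - 1 := by rw [hq, hvN1]
    by_cases hq0 : (q : ℕ) = 0
    · -- ===== fully decreasing case =====
      have hzq : (π z : ℕ) = n - 1 := by
        have e : z = q := Fin.val_injective (by omega)
        rw [e, hqv]
      have dec : ∀ j l : Fin n, (j:ℕ) < l → (π l : ℕ) < π j := by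
        intro j l hjl
        rcases Nat.lt_trichotomy ((π j : ℕ)) ((π l : ℕ)) with h | h | h
        · exfalso
          have hlN : (π l : ℕ) ≠ n - 1 := by
            intro hc
            have : (l : ℕ) = (q:ℕ) := pinj π (by omega)
            omega
          have hj0 : (j : ℕ) ≠ 0 := by
            intro hc
            have e : (j:ℕ) = (z:ℕ) := by omega
            have : (π j : ℕ) = (π z : ℕ) := by rw [Fin.val_injective e]
            have := (π l).isLt
            omega
          exact no312 H1 (i := z) (j := j) (l := l) (by omega) hjl h
            (by have := (π l).isLt; omega)
        · exact absurd (pinj π h) (by omega)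
        · exact h
      have chainLow : ∀ j : Fin n, n - 1 - (j:ℕ) ≤ π j := by
        have aux : ∀ t, ∀ j : Fin n, n - 1 - (j:ℕ) ≤ t → n - 1 - (j:ℕ) ≤ π j := by
          intro t
          induction t with
          | zero => intro j h; omega
          | succ t ih =>
            intro j h
            by_cases hj : (j : ℕ) = n - 1
            · omega
            · have hjlt := j.isLt
              obtain ⟨j', hj'v⟩ : ∃ x : Fin n, (x:ℕ) = (j:ℕ)+1 := ⟨⟨(j:ℕ)+1, by omega⟩, rfl⟩
              have h1 : (π j' : ℕ) < π j := dec j j' (by omega)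
              have h2 := ih j' (by omega)
              omega
        intro j; exact aux n j (by omega)
      have chainHigh : ∀ j : Fin n, (π j : ℕ) ≤ n - 1 - j := by
        have aux : ∀ t, ∀ j : Fin n, (j:ℕ) = t → (π j : ℕ) ≤ n - 1 - j := by
          intro t
          induction t with
          | zero =>
            intro j h
            have e : (π j : ℕ) = (π z : ℕ) := by rw [Fin.val_injective (show (j:ℕ) = (z:ℕ) by omega)]
            omega
          | succ t ih =>
            intro j h
            have hjlt := j.isLt
            obtain ⟨j₀, hj₀v⟩ : ∃ x : Fin n, (x:ℕ) = t := ⟨⟨t, by omega⟩, rfl⟩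
            have h1 : (π j : ℕ) < π j₀ := dec j₀ j (by omega)
            have h2 := ih j₀ (by omega)
            omega
        intro j; exact aux (j : ℕ) j rfl
      exact ⟨n, by omega, le_refl n, fun i =>
        ⟨fun h => absurd h (by omega), fun _ => by
          have := chainLow i; have := chainHigh i; omega⟩⟩
    · -- ===== main case : 1 ≤ q =====
      have hq1 : 1 ≤ (q:ℕ) := by omega
      have hqlt := q.isLt
      have hn2 : 2 ≤ n := by omega
      have hqn2 : (q:ℕ) ≤ n - 2 := by
        by_contra hc
        have e : (q:ℕ) = (N1:ℕ) := by omega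
        have : (π q : ℕ) = (π N1 : ℕ) := by rw [Fin.val_injective e]
        omega
      obtain ⟨k, hkdef⟩ : ∃ m : ℕ, (π z : ℕ) = m := ⟨_, rfl⟩
      have hkn : k < n := by have := (π z).isLt; omega
      have hk1 : 1 ≤ k := by
        by_contra hc
        have : (z:ℕ) = (N1:ℕ) := pinj π (by omega)
        omega
      have hk2 : k ≤ n - 2 := by
        by_contra hc
        have : (z:ℕ) = (q:ℕ) := pinj π (by omega)
        omega
      -- suffix strictly decreasing
      have dec : ∀ j l : Fin n, (q:ℕ) ≤ j → (j:ℕ) < l → (π l : ℕ) < π j := by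
        intro j l hqj hjl
        rcases Nat.lt_trichotomy ((π j : ℕ)) ((π l : ℕ)) with h | h | h
        · exfalso
          have hlN : (π l : ℕ) ≠ n - 1 := by
            intro hc
            have : (l : ℕ) = (q:ℕ) := pinj π (by omega)
            omega
          rcases Nat.eq_or_lt_of_le hqj with h0 | h0
          · have : (π j : ℕ) = (π q : ℕ) := by rw [Fin.val_injective (show (j:ℕ)=(q:ℕ) by omega)]
            have := (π l).isLt
            omega
          · exact no312 H1 (i := q) h0 hjl h (by have := (π l).isLt; omega)
        · exact absurd (pinj π h) (by omega)
        · exact h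
      have chainLow : ∀ j : Fin n, (q:ℕ) ≤ j → n - 1 - (j:ℕ) ≤ π j := by
        have aux : ∀ t, ∀ j : Fin n, (q:ℕ) ≤ j → n - 1 - (j:ℕ) ≤ t → n - 1 - (j:ℕ) ≤ π j := by
          intro t
          induction t with
          | zero => intro j _ h; omega
          | succ t ih =>
            intro j hqj h
            by_cases hj : (j : ℕ) = n - 1
            · omega
            · have hjlt := j.isLt
              obtain ⟨j', hj'v⟩ : ∃ x : Fin n, (x:ℕ) = (j:ℕ)+1 := ⟨⟨(j:ℕ)+1, by omega⟩, rfl⟩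
              have h1 : (π j' : ℕ) < π j := dec j j' hqj (by omega)
              have h2 := ih j' (by omega) (by omega)
              omega
        intro j hj; exact aux n j hj (by omega)
      have hsqq : (π (π q) : ℕ) = 0 := by rw [hq, hπN1]
      have hsqN : (π (π N1) : ℕ) = k := by rw [hπN1']; omega
      have no312sq : ∀ {i j l : Fin n}, (i:ℕ) < j → (j:ℕ) < l →
          (π (π j):ℕ) < π (π l) → (π (π l):ℕ) < π (π i) → False := by
        intro i j l h1 h2 h3 h4
        exact no312 H2 h1 h2 (by simpa only [Equiv.Perm.mul_apply] using h3)
          (by simpa only [Equiv.Perm.mul_apply] using h4)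
      have F5 : ∀ m : Fin n, (m:ℕ) < q → (π (π m):ℕ) < k := by
        intro m hm
        rcases Nat.lt_trichotomy ((π (π m)):ℕ) k with h | h | h
        · exact h
        · exfalso
          have e1 : (π m : ℕ) = (z:ℕ) := pinj π (by omega)
          have e2 : (m:ℕ) = (N1:ℕ) := pinj π (by omega)
          omega
        · exfalso
          exact no312sq (i := m) (j := q) (l := N1) hm (by omega) (by omega) (by omega)
      have F6 : ∀ m j : Fin n, (m:ℕ) < q → (q:ℕ) < j → (π (π m):ℕ) < π (π j) := by
        intro m j hm hj
        rcases Nat.lt_trichotomy ((π (π m)):ℕ) ((π (π j)):ℕ) with h | h | h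
        · exact h
        · exfalso
          have e1 : (π m : ℕ) = (π j : ℕ) := pinj π (by omega)
          have e2 : (m:ℕ) = (j:ℕ) := pinj π (by omega)
          omega
        · exfalso
          have hne : (π (π j) : ℕ) ≠ 0 := by
            intro hc
            have e1 : (π j:ℕ) = (π q:ℕ) := pinj π (by omega)
            have e2 : (j:ℕ) = (q:ℕ) := pinj π (by omega)
            omega
          exact no312sq (i := m) (j := q) (l := j) hm hj (by omega) (by omega)
      have F7a : ∀ m : Fin n, (m:ℕ) < q → 1 ≤ (π (π m):ℕ) := by
        intro m hm
        by_contra hc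
        have e1 : (π m:ℕ) = (π q:ℕ) := pinj π (by omega)
        have e2 : (m:ℕ) = (q:ℕ) := pinj π (by omega)
        omega
      have F7b : ∀ m : Fin n, (m:ℕ) < q → (π (π m):ℕ) ≤ q := by
        intro m hm
        by_contra hc
        have hx := (π (π m)).isLt
        have hp := pigeon (π*π) ((q:ℕ)+1) (n-1) ((π (π m):ℕ)+1) (n-1) (by omega) (by omega) ?_
        · omega
        · intro v h1 h2
          simp only [Equiv.Perm.mul_apply]
          have := F6 m v hm (by omega)
          have := (π (π v)).isLt
          omega
      have F8 : ∀ j : Fin n, (q:ℕ) < j → (q:ℕ)+1 ≤ (π (π j):ℕ) := by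
        intro j hj
        have hx1 : 1 ≤ (π (π j):ℕ) := by
          by_contra hc
          have e1 : (π j:ℕ) = (π q:ℕ) := pinj π (by omega)
          have e2 : (j:ℕ) = (q:ℕ) := pinj π (by omega)
          omega
        have hxlt := (π (π j)).isLt
        have hp := pigeon (π*π) 0 (q:ℕ) 0 ((π (π j):ℕ)-1) q.isLt (by omega) ?_
        · omega
        · intro v _ h2
          simp only [Equiv.Perm.mul_apply]
          refine ⟨Nat.zero_le _, ?_⟩
          rcases Nat.lt_or_ge (v:ℕ) (q:ℕ) with h | h
          · have := F6 v j h hj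
            omega
          · have e : (π (π v) : ℕ) = (π (π q) : ℕ) := by
              rw [Fin.val_injective (show (v:ℕ) = (q:ℕ) by omega)]
            omega
      have F9 : (q:ℕ) < k := by
        have hp := pigeon (π*π) 0 ((q:ℕ)-1) 1 (k-1) (by omega) (by omega) ?_
        · omega
        · intro v _ h2
          have hv : (v:ℕ) < q := by omega
          simp only [Equiv.Perm.mul_apply]
          exact ⟨F7a v hv, by have := F5 v hv; omega⟩
      have F10 : ∀ j l : Fin n, 0 < (j:ℕ) → (j:ℕ) < l → (π j:ℕ) < π l → (π l:ℕ) < k → False := by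
        intro j l h1 h2 h3 h4
        exact no312 H1 (i := z) (by omega) h2 h3 (by omega)
      obtain ⟨pq, hpq⟩ : ∃ x : Fin n, π x = q := ⟨π⁻¹ q, π.apply_symm_apply q⟩
      have hpqv : (π pq : ℕ) = q := by rw [hpq]
      have F11 : (q:ℕ) < (pq:ℕ) := by
        have hne : (pq:ℕ) ≠ q := by
          intro hc
          have : (π pq : ℕ) = (π q : ℕ) := by rw [Fin.val_injective hc]
          omega
        by_contra hc'
        have hlt : (pq:ℕ) < q := by omega
        have e : (π (π pq) : ℕ) = n - 1 := by rw [hpq, hqv]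
        have := F5 pq hlt
        omega
      have F12 : ∀ v x : Fin n, 1 ≤ (v:ℕ) → (v:ℕ) ≤ q → π x = v → (q:ℕ) < (x:ℕ) := by
        intro v x h1 h2 hxv
        have hπxv : (π x : ℕ) = (v:ℕ) := by rw [hxv]
        have hne : (x:ℕ) ≠ q := by
          intro hc
          have : (π x : ℕ) = (π q : ℕ) := by rw [Fin.val_injective hc]
          omega
        by_contra hc'
        have hx : (x:ℕ) < q := by omega
        rcases Nat.eq_or_lt_of_le h2 with hvq | hvq
        · have e : (π (π x):ℕ) = n - 1 := by
            rw [hxv, Fin.val_injective (show (v:ℕ) = (q:ℕ) from hvq), hqv]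
          have := F5 x hx
          omega
        · have h0x : 0 < (x:ℕ) := by
            by_contra h0
            have e : (π x : ℕ) = (π z : ℕ) := by
              rw [Fin.val_injective (show (x:ℕ) = (z:ℕ) by omega)]
            omega
          exact F10 x pq h0x (by omega) (by omega) (by omega)
      have F13 : ∀ v x : Fin n, (v:ℕ) ≤ q → π x = v → (x:ℕ) ≤ n - 1 - v := by
        have aux : ∀ t, ∀ v x : Fin n, (v:ℕ) = t → (v:ℕ) ≤ q → π x = v → (x:ℕ) ≤ n - 1 - v := by
          intro t
          induction t with
          | zero =>
            intro v x hv0 _ hxv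
            have e : (π x : ℕ) = 0 := by rw [hxv]; omega
            have e2 : (x:ℕ) = (N1:ℕ) := pinj π (by omega)
            have := x.isLt
            omega
          | succ t ih =>
            intro v x hvt hvq hxv
            have hπxv : (π x : ℕ) = (v:ℕ) := by rw [hxv]
            obtain ⟨v', hv'v⟩ : ∃ y : Fin n, (y:ℕ) = t := ⟨⟨t, by omega⟩, rfl⟩
            obtain ⟨x', hx'v⟩ : ∃ y : Fin n, π y = v' := ⟨π⁻¹ v', π.apply_symm_apply v'⟩
            have hπx'v : (π x' : ℕ) = t := by rw [hx'v]; omega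
            have hih := ih v' x' (by omega) (by omega) hx'v
            have hkey : (x:ℕ) < x' := by
              by_contra hk
              have hne : (x':ℕ) ≠ (x:ℕ) := by
                intro hc
                have : (π x' : ℕ) = (π x : ℕ) := by rw [Fin.val_injective hc]
                omega
              have h0x' : 0 < (x':ℕ) := by
                by_contra h0
                have e : (π x' : ℕ) = (π z : ℕ) := by
                  rw [Fin.val_injective (show (x':ℕ) = (z:ℕ) by omega)]
                omega
              exact F10 x' x h0x' (by omega) (by omega) (by omega)
            omega
        intro v x hv hxv
        exact aux (v:ℕ) v x rfl hv hxv
      have F14 : (q:ℕ)+1 ≤ n - 1 - q := by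
        have := F13 q pq (le_refl _) hpq
        omega
      have F15 : ∀ m : Fin n, (m:ℕ) < q → n - 1 - (q:ℕ) ≤ (π m:ℕ) := by
        intro m hm
        have h7a := F7a m hm
        have h7b := F7b m hm
        have h12 := F12 (π (π m)) (π m) h7a h7b rfl
        have hcl := chainLow (π m) (by omega)
        omega
      have F16 : ∀ x : Fin n, (q:ℕ) < x → (π x:ℕ) ≤ n - 2 - q := by
        intro x hx
        have hw2 : (π x:ℕ) ≤ n - 2 := by
          have := (π x).isLt
          by_contra hc
          have e : (x:ℕ) = (q:ℕ) := pinj π (by omega)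
          omega
        by_contra hc
        have h8 := F8 x hx
        have e13 := F13 q pq (le_refl _) hpq
        rcases Nat.lt_or_ge (pq:ℕ) ((π x):ℕ) with h | h
        · have hd := dec pq (π x) (by omega) h
          omega
        · have e : (π x) = pq := Fin.val_injective (by omega)
          have : (π (π x) : ℕ) = (q:ℕ) := by rw [e, hpq]
          omega
      have F17 : ∀ j : Fin n, (q:ℕ) < j → (π j:ℕ) = n - 1 - j := by
        have aux : ∀ t, ∀ j : Fin n, (j:ℕ) = (q:ℕ)+1+t → (π j:ℕ) ≤ n - 1 - j := by
          intro t
          induction t with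
          | zero =>
            intro j hj
            have := F16 j (by omega)
            omega
          | succ t ih =>
            intro j hj
            have hjlt := j.isLt
            obtain ⟨j₀, hj₀v⟩ : ∃ y : Fin n, (y:ℕ) = (q:ℕ)+1+t := ⟨⟨(q:ℕ)+1+t, by omega⟩, rfl⟩
            have h1 := ih j₀ (by omega)
            have h2 := dec j₀ j (by omega) (by omega)
            omega
        intro j hj
        have hjlt := j.isLt
        have hup := aux ((j:ℕ)-(q:ℕ)-1) j (by omega)
        have hlo := chainLow j (by omega)
        omega
      have F18 : ∀ m : Fin n, 1 ≤ (m:ℕ) → (m:ℕ) < q → k < (π m:ℕ) := by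
        intro m h1 h2
        have h14 := F14
        obtain ⟨a, hav⟩ : ∃ y : Fin n, (y:ℕ) = n - 1 - q := ⟨⟨n-1-(q:ℕ), by omega⟩, rfl⟩
        obtain ⟨b, hbv⟩ : ∃ y : Fin n, (y:ℕ) = n - 1 - m := ⟨⟨n-1-(m:ℕ), by omega⟩, rfl⟩
        have ea : π a = q := Fin.val_injective (by have := F17 a (by omega); omega)
        have eaa : (π (π a) : ℕ) = n - 1 := by rw [ea, hqv]
        have eb : π b = m := Fin.val_injective (by have := F17 b (by omega); omega)
        have ebb : (π (π b) : ℕ) = (π m : ℕ) := by rw [eb]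
        by_contra hc
        have hne : (π m : ℕ) ≠ k := by
          intro he
          have : (m:ℕ) = (z:ℕ) := pinj π (by omega)
          omega
        exact no312sq (i := a) (j := b) (l := N1) (by omega) (by omega) (by omega) (by omega)
      have F19 : k = n - 1 - (q:ℕ) := by
        have hge := F15 z (by omega)
        by_contra hc
        have hck : n - (q:ℕ) ≤ k := by omega
        obtain ⟨w, hwv⟩ : ∃ y : Fin n, (y:ℕ) = n - 1 - q := ⟨⟨n-1-(q:ℕ), by omega⟩, rfl⟩
        obtain ⟨y, hyw⟩ : ∃ x : Fin n, π x = w := ⟨π⁻¹ w, π.apply_symm_apply w⟩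
        have hywv : (π y:ℕ) = n - 1 - q := by rw [hyw]; omega
        have hylt := y.isLt
        rcases Nat.lt_trichotomy ((y:ℕ)) ((q:ℕ)) with h | h | h
        · have h0y : 1 ≤ (y:ℕ) := by
            by_contra h0
            have e : (π y : ℕ) = (π z : ℕ) := by
              rw [Fin.val_injective (show (y:ℕ) = (z:ℕ) by omega)]
            omega
          have := F18 y h0y h
          omega
        · have e : (π y : ℕ) = (π q : ℕ) := by rw [Fin.val_injective h]
          omega
        · have := F17 y h
          omega
      have F20 : ∀ m : Fin n, (m:ℕ) < q → (π m:ℕ) = k + m := by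
        have aux : ∀ t, ∀ m : Fin n, (m:ℕ) < t → (m:ℕ) < q → (π m:ℕ) = k + m := by
          intro t
          induction t with
          | zero => omega
          | succ t ih =>
            intro m hmt hmq
            rcases Nat.lt_or_ge (m:ℕ) t with hlt | hge
            · exact ih m hlt hmq
            · have hmt' : (m:ℕ) = t := by omega
              have h15 := F15 m hmq
              have h19 := F19
              have h14 := F14
              have hπmlt := (π m).isLt
              have hlow : k + (m:ℕ) ≤ (π m:ℕ) := by
                by_contra hc
                obtain ⟨s, hsv⟩ : ∃ y : Fin n, (y:ℕ) = (π m:ℕ) - k := ⟨⟨(π m:ℕ)-k, by omega⟩, rfl⟩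
                have hs := ih s (by omega) (by omega)
                have : (m:ℕ) = (s:ℕ) := pinj π (by omega)
                omega
              rcases Nat.eq_or_lt_of_le hlow with he | hgt
              · omega
              · exfalso
                rcases Nat.eq_zero_or_pos (m:ℕ) with h0 | h0
                · have e : (π m:ℕ) = (π z:ℕ) := by
                    rw [Fin.val_injective (show (m:ℕ) = (z:ℕ) by omega)]
                  omega
                · have hkm : k + (m:ℕ) ≤ n - 2 := by omega
                  obtain ⟨w, hwv⟩ : ∃ y : Fin n, (y:ℕ) = k + m := ⟨⟨k+(m:ℕ), by omega⟩, rfl⟩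
                  obtain ⟨y, hyw⟩ : ∃ x : Fin n, π x = w := ⟨π⁻¹ w, π.apply_symm_apply w⟩
                  have hyval : (π y : ℕ) = k + m := by rw [hyw]; omega
                  have hylt := y.isLt
                  have hy1 : (m:ℕ) < y := by
                    rcases Nat.lt_trichotomy ((y:ℕ)) ((m:ℕ)) with h | h | h
                    · have := ih y (by omega) (by omega)
                      omega
                    · have e : (π y:ℕ) = (π m:ℕ) := by rw [Fin.val_injective h]
                      omega
                    · exact h
                  have hy2 : (y:ℕ) < q := by
                    rcases Nat.lt_trichotomy ((y:ℕ)) ((q:ℕ)) with h | h | h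
                    · exact h
                    · exfalso
                      have e : (π y:ℕ) = (π q:ℕ) := by rw [Fin.val_injective h]
                      omega
                    · exfalso
                      have := F17 y h
                      omega
                  obtain ⟨m₀, hm₀v⟩ : ∃ y : Fin n, (y:ℕ) = (m:ℕ) - 1 := ⟨⟨(m:ℕ)-1, by omega⟩, rfl⟩
                  have him₀ := ih m₀ (by omega) (by omega)
                  have e1 : (π (π m₀) : ℕ) = n - 1 - (k + (m:ℕ) - 1) := by
                    have := F17 (π m₀) (by omega)
                    omega
                  have e2 : (π (π m) : ℕ) = n - 1 - (π m:ℕ) := F17 (π m) (by omega)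
                  have e3 : (π (π y) : ℕ) = n - 1 - (k + (m:ℕ)) := by
                    have := F17 (π y) (by omega)
                    omega
                  exact no312sq (i := m₀) (j := m) (l := y) (by omega) (by omega) (by omega)
                    (by omega)
        intro m hm
        exact aux n m m.isLt hm
      have h19 := F19
      have h14 := F14
      refine ⟨k, by omega, by omega, fun i => ⟨fun hi => ?_, fun hi => ?_⟩⟩
      · rcases Nat.lt_or_ge (i:ℕ) (q:ℕ) with h | h
        · have := F20 i h
          omega
        · have e : (π i : ℕ) = (π q : ℕ) := by
            rw [Fin.val_injective (show (i:ℕ) = (q:ℕ) by omega)]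
          omega
      · have := F17 i (by omega)
        omega
  · rintro ⟨k, hk1, hk2, hform⟩
    constructor
    · rintro ⟨i, j, l, hij, hjl, h1, h2⟩
      have hij' := Fin.lt_def.mp hij
      have hjl' := Fin.lt_def.mp hjl
      have h1' := Fin.lt_def.mp h1
      have h2' := Fin.lt_def.mp h2
      have hi := hform i
      have hj := hform j
      have hl := hform l
      have := i.isLt; have := j.isLt; have := l.isLt
      have := (π i).isLt; have := (π j).isLt; have := (π l).isLt
      omega
    · rintro ⟨i, j, l, hij, hjl, h1, h2⟩
      simp only [Equiv.Perm.mul_apply] at h1 h2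
      have hij' := Fin.lt_def.mp hij
      have hjl' := Fin.lt_def.mp hjl
      have h1' := Fin.lt_def.mp h1
      have h2' := Fin.lt_def.mp h2
      have hi := hform i
      have hj := hform j
      have hl := hform l
      have hi2 := hform (π i)
      have hj2 := hform (π j)
      have hl2 := hform (π l)
      have := i.isLt; have := j.isLt; have := l.isLt
      have := (π i).isLt; have := (π j).isLt; have := (π l).isLt
      have := (π (π i)).isLt; have := (π (π j)).isLt; have := (π (π l)).isLt
      omega
end

section
/- The number of permutations π of [n] with π(n) = 1 such that both π and π² avoid the pattern 312 equals n − ⌈n/2⌉ = ⌊n/2⌋, for n ≥ 2. -/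
open Equiv Finset

def permA (n a : ℕ) (hn : 0 < n) (ha : a < n) : Equiv.Perm (Fin n) where
  toFun i := if h : a + i.val < n then ⟨a + i.val, h⟩ else ⟨n - 1 - i.val, by omega⟩
  invFun v := if h : a ≤ v.val then ⟨v.val - a, by omega⟩ else ⟨n - 1 - v.val, by omega⟩
  left_inv i := by
    have hi := i.isLt
    by_cases h : a + i.val < n
    · simp only [dif_pos h]
      have : a ≤ (⟨a + i.val, h⟩ : Fin n).val := by simp
      simp only [dif_pos this]
      exact Fin.ext (by simp)
    · simp only [dif_neg h]
      have h2 : ¬ (a ≤ (⟨n - 1 - i.val, by omega⟩ : Fin n).val) := by simp; omega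
      simp only [dif_neg h2]
      exact Fin.ext (by simp; omega)
  right_inv v := by
    have hv := v.isLt
    by_cases h : a ≤ v.val
    · simp only [dif_pos h]
      have h2 : a + (v.val - a) < n := by omega
      simp only [dif_pos h2]
      exact Fin.ext (by simp; omega)
    · simp only [dif_neg h]
      have h2 : ¬ (a + (n - 1 - v.val) < n) := by omega
      simp only [dif_neg h2]
      exact Fin.ext (by simp; omega)

lemma permA_val (n a : ℕ) (hn : 0 < n) (ha : a < n) (i : Fin n) :
    ((permA n a hn ha) i).val = if a + i.val < n then a + i.val else n - 1 - i.val := by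
  by_cases h : a + i.val < n
  · simp [permA, Equiv.coe_fn_mk, dif_pos h, if_pos h]
  · simp [permA, Equiv.coe_fn_mk, dif_neg h, if_neg h]

lemma permA_sq_val (n a : ℕ) (hn : 0 < n) (ha : a < n) (hna : n ≤ 2*a) (i : Fin n) :
    ((permA n a hn ha) ((permA n a hn ha) i)).val =
      if a + i.val < n then n - 1 - a - i.val
      else if i.val < a then i.val else a + (n - 1 - i.val) := by
  have hi := i.isLt
  rw [permA_val, permA_val]
  split_ifs <;> omega

lemma permA_avoids (n a : ℕ) (hn : 0 < n) (ha : a < n) : Avoids312 (permA n a hn ha) := by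
  rintro ⟨i, j, l, hij, hjl, h1, h2⟩
  rw [Fin.lt_def] at hij hjl h1 h2
  rw [permA_val, permA_val] at h1
  rw [permA_val, permA_val] at h2
  have := i.isLt; have := j.isLt; have := l.isLt
  split_ifs at h1 h2 <;> omega

lemma permA_sq_avoids (n a : ℕ) (hn : 0 < n) (ha : a < n) (hna : n ≤ 2*a) :
    Avoids312 (permA n a hn ha * permA n a hn ha) := by
  rintro ⟨i, j, l, hij, hjl, h1, h2⟩
  rw [Fin.lt_def] at hij hjl h1 h2
  simp only [Equiv.Perm.mul_apply] at h1 h2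
  rw [permA_sq_val n a hn ha hna, permA_sq_val n a hn ha hna] at h1
  rw [permA_sq_val n a hn ha hna, permA_sq_val n a hn ha hna] at h2
  have := i.isLt; have := j.isLt; have := l.isLt
  split_ifs at h1 h2 <;> omega

lemma permA_last (n a : ℕ) (hn : 2 ≤ n) (ha : a < n) (ha1 : 1 ≤ a) :
    (permA n a (Nat.zero_lt_of_lt hn) ha) ⟨n-1, Nat.sub_lt (Nat.zero_lt_of_lt hn) Nat.one_pos⟩ = ⟨0, Nat.zero_lt_of_lt hn⟩ := by
  apply Fin.ext
  rw [permA_val]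
  simp only
  have : ¬ (a + (n-1) < n) := by omega
  rw [if_neg this]
  omega

lemma permA_zero (n a : ℕ) (hn : 0 < n) (ha : a < n) :
    ((permA n a hn ha) ⟨0, hn⟩).val = a := by
  rw [permA_val]
  simp [ha]

lemma main_char (n : ℕ) (hn : 2 ≤ n) (π : Equiv.Perm (Fin n))
    (hlast : π ⟨n-1, Nat.sub_lt (Nat.zero_lt_of_lt hn) Nat.one_pos⟩ = ⟨0, Nat.zero_lt_of_lt hn⟩)
    (hav1 : Avoids312 π) (hav2 : Avoids312 (π * π)) :
    ∃ a, n ≤ 2*a ∧ a < n ∧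
      ∀ i : Fin n, (π i).val = if a + i.val < n then a + i.val else n - 1 - i.val := by
  set N := n - 1 with hN
  set P : ℕ → ℕ := fun i => if h : i < n then (π ⟨i, h⟩).val else 0 with hPdef
  have hPfin : ∀ (i : Fin n), P i.val = (π i).val := by
    intro i; simp [hPdef, i.isLt]
  have hPlt : ∀ i, i < n → P i < n := by
    intro i hi; simp only [hPdef, dif_pos hi]; exact (π ⟨i, hi⟩).isLt
  have hinj : ∀ i j, i < n → j < n → P i = P j → i = j := by
    intro i j hi hj hij
    simp only [hPdef, dif_pos hi, dif_pos hj] at hij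
    have := π.injective (Fin.ext hij)
    exact Fin.mk.injEq .. ▸ (by injection this)
  have hsurj : ∀ v, v < n → ∃ i, i < n ∧ P i = v := by
    intro v hv
    refine ⟨(π.symm ⟨v, hv⟩).val, (π.symm ⟨v, hv⟩).isLt, ?_⟩
    rw [hPfin]
    simp
  have hA1 : ∀ i j l, i < j → j < l → l < n → ¬(P j < P l ∧ P l < P i) := by
    rintro i j l hij hjl hl ⟨u1, u2⟩
    have hi : i < n := by omega
    have hj : j < n := by omega
    apply hav1
    refine ⟨⟨i, hi⟩, ⟨j, hj⟩, ⟨l, hl⟩, by simpa [Fin.lt_def], by simpa [Fin.lt_def], ?_, ?_⟩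
    · rw [Fin.lt_def, ← hPfin, ← hPfin]; exact u1
    · rw [Fin.lt_def, ← hPfin, ← hPfin]; exact u2
  have hQfin : ∀ (i : Fin n), P (P i.val) = ((π * π) i).val := by
    intro i
    have h1 : P i.val = (π i).val := hPfin i
    have : (⟨P i.val, hPlt _ i.isLt⟩ : Fin n) = π i := Fin.ext h1
    have h2 : P (P i.val) = (π (π i)).val := by
      rw [hPfin i]; exact hPfin (π i)
    exact h2
  have hA2 : ∀ i j l, i < j → j < l → l < n → ¬(P (P j) < P (P l) ∧ P (P l) < P (P i)) := by
    rintro i j l hij hjl hl ⟨u1, u2⟩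
    have hi : i < n := by omega
    have hj : j < n := by omega
    apply hav2
    refine ⟨⟨i, hi⟩, ⟨j, hj⟩, ⟨l, hl⟩, by simpa [Fin.lt_def], by simpa [Fin.lt_def], ?_, ?_⟩
    · rw [Fin.lt_def, ← hQfin ⟨j, hj⟩, ← hQfin ⟨l, hl⟩]; exact u1
    · rw [Fin.lt_def, ← hQfin ⟨l, hl⟩, ← hQfin ⟨i, hi⟩]; exact u2
  have hlastP : P N = 0 := by
    have := hPfin ⟨n-1, by omega⟩
    rw [hlast] at this
    exact this
  -- position of max
  obtain ⟨m, hm, hPm⟩ := hsurj N (by omega)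
  have hmN : m < N := by
    rcases Nat.lt_or_ge m N with h | h
    · exact h
    · exfalso
      have : m = N := by omega
      rw [this, hlastP] at hPm; omega
  -- descending after m
  have hdesc : ∀ j l, m ≤ j → j < l → l < n → P l < P j := by
    intro j l hmj hjl hl
    have hlm : l ≠ m := by omega
    have hPlN : P l < N := by
      have h1 : P l < n := hPlt l hl
      have h2 : P l ≠ N := fun h => hlm (hinj l m hl hm (h.trans hPm.symm))
      omega
    rcases Nat.eq_or_lt_of_le hmj with h | h
    · have : P j = N := by rw [← h]; exact hPm
      omega
    · by_contra hc
      push_neg at hc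
      have hne : P j ≠ P l := fun h => (by omega : j ≠ l) (hinj j l (by omega) hl h)
      exact hA1 m j l h hjl hl ⟨by omega, by omega⟩
  -- Q facts
  have hQm : P (P m) = 0 := by rw [hPm, hlastP]
  have hQinj : ∀ i j, i < n → j < n → P (P i) = P (P j) → i = j := by
    intro i j hi hj h
    exact hinj i j hi hj (hinj _ _ (hPlt _ hi) (hPlt _ hj) h)
  have hcross : ∀ i l, i < m → m < l → l < n → P (P i) < P (P l) := by
    intro i l him hml hl
    have hl0 : P (P l) ≠ 0 := by
      intro h
      exact (by omega : l ≠ m) (hQinj l m hl hm (h.trans hQm.symm))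
    have hne : P (P i) ≠ P (P l) := fun h => (by omega : i ≠ l) (hQinj i l (by omega) hl h)
    by_contra hc
    push_neg at hc
    exact hA2 i m l him hml hl ⟨by omega, by omega⟩
  -- counting: Q values split around m
  have hQlow : ∀ i, i < m → P (P i) ≤ m := by
    intro i him
    have hin : i < n := by omega
    have hQlt : P (P i) < n := hPlt _ (hPlt _ hin)
    have hsub : image (fun l => P (P l)) (Ioo m n) ⊆ Ioc (P (P i)) N := by
      intro x hx
      obtain ⟨l, hl, rfl⟩ := mem_image.mp hx
      rw [mem_Ioo] at hl
      rw [mem_Ioc]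
      exact ⟨hcross i l him hl.1 hl.2, by have := hPlt _ (hPlt _ hl.2); omega⟩
    have hcard : (image (fun l => P (P l)) (Ioo m n)).card = N - m := by
      rw [card_image_of_injOn, Nat.card_Ioo]
      · omega
      · intro x hx y hy hxy
        rw [mem_coe, mem_Ioo] at hx hy
        exact hQinj x y hx.2 hy.2 hxy
    have := card_le_card hsub
    rw [hcard, Nat.card_Ioc] at this
    omega
  have hQhigh : ∀ l, m < l → l < n → m + 1 ≤ P (P l) := by
    intro l hml hl
    have hl0 : P (P l) ≠ 0 := by
      intro h
      exact (by omega : l ≠ m) (hQinj l m hl hm (h.trans hQm.symm))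
    have hsub : image (fun x => P (P x)) (range (m+1)) ⊆ Iio (P (P l)) := by
      intro x hx
      obtain ⟨y, hy, rfl⟩ := mem_image.mp hx
      rw [mem_range] at hy
      rw [mem_Iio]
      rcases Nat.lt_or_ge y m with h | h
      · exact hcross y l h hml hl
      · have : y = m := by omega
        rw [this, hQm]
        omega
    have hcard : (image (fun x => P (P x)) (range (m+1))).card = m + 1 := by
      rw [card_image_of_injOn, card_range]
      intro x hx y hy hxy
      rw [mem_coe, mem_range] at hx hy
      exact hQinj x y (by omega) (by omega) hxy
    have := card_le_card hsub
    rw [hcard, Nat.card_Iio] at this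
    omega
  -- D characterization
  have hDleft : ∀ x, (∃ l, m < l ∧ l < n ∧ P l = x) → m + 1 ≤ P x := by
    rintro x ⟨l, h1, h2, rfl⟩
    exact hQhigh l h1 h2
  have hDright : ∀ x, x < n → m + 1 ≤ P x → ∃ l, m < l ∧ l < n ∧ P l = x := by
    have h1 : image P ((range n).filter (fun x => m + 1 ≤ P x)) = Icc (m+1) N := by
      apply Finset.Subset.antisymm
      · intro v hv
        obtain ⟨y, hy, rfl⟩ := mem_image.mp hv
        rw [mem_filter, mem_range] at hy
        rw [mem_Icc]
        exact ⟨hy.2, by have := hPlt _ hy.1; omega⟩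
      · intro v hv
        rw [mem_Icc] at hv
        obtain ⟨y, hy, rfl⟩ := hsurj v (by omega)
        exact mem_image.mpr ⟨y, mem_filter.mpr ⟨mem_range.mpr hy, hv.1⟩, rfl⟩
    have hcardBig : ((range n).filter (fun x => m + 1 ≤ P x)).card = N - m := by
      have := card_image_of_injOn (s := (range n).filter (fun x => m + 1 ≤ P x))
        (f := P) (by
          intro x hx y hy hxy
          rw [mem_coe, mem_filter, mem_range] at hx hy
          exact hinj x y hx.1 hy.1 hxy)
      rw [h1, Nat.card_Icc] at this
      omega
    have h2 : image P (Ioo m n) ⊆ (range n).filter (fun x => m + 1 ≤ P x) := by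
      intro x hx
      obtain ⟨l, hl, rfl⟩ := mem_image.mp hx
      rw [mem_Ioo] at hl
      exact mem_filter.mpr ⟨mem_range.mpr (hPlt _ hl.2), hQhigh l hl.1 hl.2⟩
    have h3 : (image P (Ioo m n)).card = N - m := by
      rw [card_image_of_injOn, Nat.card_Ioo]
      · omega
      · intro x hx y hy hxy
        rw [mem_coe, mem_Ioo] at hx hy
        exact hinj x y hx.2 hy.2 hxy
    have h4 : image P (Ioo m n) = (range n).filter (fun x => m + 1 ≤ P x) :=
      eq_of_subset_of_card_le h2 (by rw [hcardBig, h3])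
    intro x hx hPx
    have : x ∈ image P (Ioo m n) := by
      rw [h4]
      exact mem_filter.mpr ⟨mem_range.mpr hx, hPx⟩
    obtain ⟨l, hl, hlx⟩ := mem_image.mp this
    rw [mem_Ioo] at hl
    exact ⟨l, hl.1, hl.2, hlx⟩
  -- position of value m
  obtain ⟨x0, hx0n, hPx0⟩ := hsurj m (by omega)
  have hmx0 : m < x0 := by
    rcases lt_trichotomy x0 m with h | h | h
    · exfalso
      have h2 := hQlow x0 h
      rw [hPx0, hPm] at h2
      omega
    · exfalso
      rw [h, hPm] at hPx0
      omega
    · exact h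
  have hP0 : m + 1 ≤ P 0 := hDleft 0 ⟨N, hmN, by omega, hlastP⟩
  -- the tail
  have htail : ∀ l, m < l → l < n → P l = N - l := by
    by_contra hc
    push_neg at hc
    obtain ⟨l0, hml0, hl0n, hPl0⟩ := hc
    have hSne : ((Ioo m n).filter (fun l => P l ≠ N - l)).Nonempty :=
      ⟨l0, mem_filter.mpr ⟨mem_Ioo.mpr ⟨hml0, hl0n⟩, hPl0⟩⟩
    obtain ⟨L, ⟨hmL, hLn, hPL⟩, hLmax'⟩ :
        ∃ L, (m < L ∧ L < n ∧ P L ≠ N - L) ∧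
          ∀ l, m < l → l < n → P l ≠ N - l → l ≤ L := by
      refine ⟨((Ioo m n).filter (fun l => P l ≠ N - l)).max' hSne, ?_, ?_⟩
      · have hLS := ((Ioo m n).filter (fun l => P l ≠ N - l)).max'_mem hSne
        rw [mem_filter, mem_Ioo] at hLS
        exact ⟨hLS.1.1, hLS.1.2, hLS.2⟩
      · intro l h1 h2 h3
        exact Finset.le_max' _ l (mem_filter.mpr ⟨mem_Ioo.mpr ⟨h1, h2⟩, h3⟩)
    have hafter : ∀ l, L < l → l < n → P l = N - l := by
      intro l h1 h2
      by_contra h3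
      have := hLmax' l (by omega) h2 h3
      omega
    have hLN : L < N := by
      rcases Nat.lt_or_ge L N with h | h
      · exact h
      · exfalso
        have : L = N := by omega
        rw [this, hlastP] at hPL
        omega
    set g := N - L with hgdef
    have hg1 : 1 ≤ g := by omega
    have hPL1 : P (L + 1) = g - 1 := by
      rw [hafter (L+1) (by omega) (by omega)]
      omega
    have hvg : g + 1 ≤ P L := by
      have := hdesc L (L+1) (by omega) (by omega) (by omega)
      have hne : P L ≠ g := by rw [hgdef]; exact hPL
      omega
    have hfrontg : ∀ w, w < g → m + 1 ≤ P w := by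
      intro w hw
      apply hDleft
      refine ⟨N - w, by omega, by omega, ?_⟩
      rw [hafter (N - w) (by omega) (by omega)]
      omega
    have hgnotD : ∀ l, m < l → l < n → P l ≠ g := by
      intro l h1 h2
      rcases Nat.lt_or_ge L l with h | h
      · rw [hafter l h h2]
        omega
      · rcases Nat.eq_or_lt_of_le h with h' | h'
        · rw [h']
          exact hPL
        · have := hdesc l L (by omega) h' (by omega)
          omega
    have hPg : P g ≤ m := by
      by_contra h
      push_neg at h
      obtain ⟨l, h1, h2, h3⟩ := hDright g (by omega) h
      exact hgnotD l h1 h2 h3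
    rcases lt_trichotomy g x0 with hgx | hgx | hgx
    · -- pattern (0, g, x0) in P
      have hPgm : P g < m := by
        have : P g ≠ m := by
          intro h
          exact (by omega : g ≠ x0) (hinj g x0 (by omega) hx0n (h.trans hPx0.symm))
        omega
      exact hA1 0 g x0 (by omega) hgx hx0n ⟨by omega, by omega⟩
    · -- x0 = g : pattern (m, g, v) in P
      set v := P L with hvdef
      have hvn : v < n := hPlt L hLn
      have hPv : m + 1 ≤ P v := hDleft v ⟨L, hmL, hLn, rfl⟩
      have hPvN : P v < N := by
        have h1 : P v ≠ N := by
          intro h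
          have := hinj v m hvn hm (h.trans hPm.symm)
          omega
        have := hPlt v hvn
        omega
      have hPgm : P g = m := by rw [hgx]; exact hPx0
      exact hA1 m g v (by omega) (by omega) hvn ⟨by omega, by omega⟩
    · -- x0 < g: contradiction with hfrontg
      have := hfrontg x0 hgx
      rw [hPx0] at this
      omega
  -- value m is at position N - m, so 2m < N
  have hx0val : P x0 = N - x0 := htail x0 hmx0 hx0n
  have h2m : 2*m < N := by
    rw [hPx0] at hx0val
    omega
  -- front values are at least N - m
  have hfrontbig : ∀ i, i ≤ m → N - m ≤ P i := by
    intro i hi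
    by_contra h
    push_neg at h
    have h1 : P (N - P i) = P i := by
      rw [htail (N - P i) (by omega) (by omega)]
      omega
    have := hinj i (N - P i) (by omega) (by omega) h1.symm
    omega
  -- front is increasing
  have hfrontinc : ∀ i j, i < j → j ≤ m → P i < P j := by
    intro i j hij hjm
    have hin : i < n := by omega
    have hPiN : P i < N := by
      have h1 : P i ≠ N := by
        intro h
        have := hinj i m hin hm (h.trans hPm.symm)
        omega
      have := hPlt i hin
      omega
    rcases Nat.eq_or_lt_of_le hjm with h | hjm'
    · subst h
      omega
    · by_contra hc
      push_neg at hc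
      have hne : P i ≠ P j := fun h => (by omega : i ≠ j) (hinj i j hin (by omega) h)
      have hQNj : P (P (N - j)) = P j := by
        rw [htail (N - j) (by omega) (by omega)]
        congr 1
        omega
      have hQNi : P (P (N - i)) = P i := by
        rw [htail (N - i) (by omega) (by omega)]
        congr 1
        omega
      have hQNm : P (P (N - m)) = N := by
        rw [htail (N - m) (by omega) (by omega)]
        have : N - (N - m) = m := by omega
        rw [this, hPm]
      apply hA2 (N - m) (N - j) (N - i) (by omega) (by omega) (by omega)
      rw [hQNj, hQNi, hQNm]
      omega
  -- chain inequalities: P i = P 0 + i on [0, m]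
  have hchain : ∀ d i, i + d ≤ m → P i + d ≤ P (i + d) := by
    intro d
    induction d with
    | zero =>
      intro i _
      show P i ≤ P i
      exact le_rfl
    | succ k ih =>
      intro i hi
      have h1 := ih i (by omega)
      have h2 := hfrontinc (i + k) (i + k + 1) (by omega) (by omega)
      show P i + (k + 1) ≤ P (i + k + 1)
      omega
  set a := P 0 with hadef
  have ham : a = N - m := by
    have h1 := hfrontbig 0 (by omega)
    have h2 := hchain m 0 (by omega)
    rw [Nat.zero_add, hPm] at h2
    omega
  have hfront : ∀ i, i ≤ m → P i = a + i := by
    intro i hi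
    have h1 := hchain i 0 (by omega)
    rw [Nat.zero_add] at h1
    have h2 := hchain (m - i) i (by omega)
    have h3 : i + (m - i) = m := by omega
    rw [h3, hPm] at h2
    omega
  refine ⟨a, by omega, by omega, ?_⟩
  intro i
  have hiv := i.isLt
  rw [← hPfin i]
  by_cases h : a + i.val < n
  · rw [if_pos h]
    exact hfront i.val (by omega)
  · rw [if_neg h]
    rw [htail i.val (by omega) hiv]

theorem stmt5 (n : ℕ) (hn : 2 ≤ n) :
    (Nat.card {π : Equiv.Perm (Fin n) //
        π ⟨n - 1, by omega⟩ = ⟨0, by omega⟩ ∧ Avoids312 π ∧ Avoids312 (π * π)} : ℤ) =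
      (n : ℤ) - ⌈(n : ℚ) / 2⌉ := by
  have h0 : 0 < n := by omega
  have hcard : Nat.card {π : Equiv.Perm (Fin n) //
      π ⟨n - 1, by omega⟩ = ⟨0, by omega⟩ ∧ Avoids312 π ∧ Avoids312 (π * π)}
      = n - (n+1)/2 := by
    set F : {a : ℕ // n ≤ 2*a ∧ a < n} →
        {π : Equiv.Perm (Fin n) //
            π ⟨n - 1, by omega⟩ = ⟨0, by omega⟩ ∧ Avoids312 π ∧ Avoids312 (π * π)} :=
      fun x => ⟨permA n x.1 h0 x.2.2,
          permA_last n x.1 hn x.2.2 (by have := x.2.1; omega),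
          permA_avoids n x.1 h0 x.2.2,
          permA_sq_avoids n x.1 h0 x.2.2 x.2.1⟩ with hF
    have hbij : Function.Bijective F := by
      constructor
      · intro x y hxy
        have hpp : permA n x.1 h0 x.2.2 = permA n y.1 h0 y.2.2 := by
          have := congrArg Subtype.val hxy
          simpa [hF] using this
        have h1 : ((permA n x.1 h0 x.2.2) ⟨0, h0⟩).val
            = ((permA n y.1 h0 y.2.2) ⟨0, h0⟩).val := by rw [hpp]
        rw [permA_zero, permA_zero] at h1
        exact Subtype.ext h1
      · rintro ⟨σ, hσ1, hσ2, hσ3⟩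
        obtain ⟨a, h2a, han, hf⟩ := main_char n hn σ hσ1 hσ2 hσ3
        refine ⟨⟨a, h2a, han⟩, ?_⟩
        rw [hF]
        apply Subtype.ext
        apply Equiv.ext
        intro i
        apply Fin.ext
        simp only
        rw [permA_val, hf i]
    have h1 := Nat.card_eq_of_bijective _ hbij
    rw [← h1]
    have e : {a : ℕ // n ≤ 2*a ∧ a < n} ≃ {a : ℕ // a ∈ Finset.Ico ((n+1)/2) n} :=
      Equiv.subtypeEquivRight (by intro a; rw [Finset.mem_Ico]; omega)
    rw [Nat.card_congr e, Nat.card_eq_finsetCard, Nat.card_Ico]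
  rw [hcard]
  have hceil : (⌈(n : ℚ)/2⌉ : ℤ) = (((n+1)/2 : ℕ) : ℤ) := by
    set m := (n+1)/2 with hm
    have hm1 : (m:ℚ) * 2 ≤ (n:ℚ) + 1 := by exact_mod_cast (by omega : m*2 ≤ n+1)
    have hm2 : (n:ℚ) ≤ (m:ℚ) * 2 := by exact_mod_cast (by omega : n ≤ m * 2)
    rw [Int.ceil_eq_iff]
    constructor
    · push_cast
      linarith
    · push_cast
      linarith
  rw [hceil]
  have hle : (n+1)/2 ≤ n := by omega
  push_cast [Nat.cast_sub hle]
  ring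
end

section
/- For all n ≥ 1, the number of permutations π of [n] such that π avoids both patterns 312 and 321, and π² avoids 312, equals the n-th Fibonacci number F_n (with F_1 = 1, F_2 = 2, or equivalently standard Fibonacci with F_1 = F_2 = 1 shifted appropriately so that the count is 1, 2, 3, 5, 8, …). -/
/-!
The three conditions say exactly that `π` moves every point by at most one. If `π` avoids 312
and 321, at most one value smaller than `π i` can stand to the right of `i`, so `π i ≤ i + 1`.
Under this bound, a point `b` with `π b ≤ b - 2` forces `π` to be the cycle
`π b ↦ π b + 1 ↦ ⋯ ↦ b ↦ π b` on the interval `[π b, b]`, and then `π²` contains 312 at the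
positions `π b, b - 1, b`. Conversely a permutation moving every point by at most one is a
product of disjoint adjacent transpositions, hence an involution avoiding all three patterns.
Such permutations satisfy the Fibonacci recursion: either `π 0 = 0`, or `π` swaps `0` and `1`.
-/

open Equiv Finset

def Avoids321 {n : ℕ} (π : Equiv.Perm (Fin n)) : Prop :=
  ¬ ∃ i j l : Fin n, i < j ∧ j < l ∧ π l < π j ∧ π j < π i

namespace Equiv.Perm

variable {n : ℕ} {π : Perm (Fin n)}

theorem card_filter_apply_lt (π : Perm (Fin n)) (v : Fin n) : #{p | π p < v} = v := by
  have : ({p | π p < v} : Finset (Fin n)) = (Iio v).map π.symm.toEmbedding := by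
    ext p
    simp [mem_map_equiv]
  rw [this, card_map, Fin.card_Iio]

theorem val_apply_le_succ_of_avoids (h312 : Avoids312 π) (h321 : Avoids321 π) (i : Fin n) :
    (π i : ℕ) ≤ i + 1 := by
  set S : Finset (Fin n) := {p | π p < π i}
  have hlate : #{p ∈ S | i < p} ≤ 1 := by
    have key : ∀ a b, i < a → a < b → π a < π i → π b < π i → False := fun a b hia hab ha hb =>
      (lt_or_gt_of_ne (π.injective.ne hab.ne)).elim
        (fun hv => h312 ⟨i, a, b, hia, hab, hv, hb⟩) (fun hv => h321 ⟨i, a, b, hia, hab, hv, ha⟩)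
    refine card_le_one.mpr fun a ha b hb => ?_
    simp only [S, mem_filter, mem_univ, true_and] at ha hb
    by_contra hab
    rcases lt_or_gt_of_ne hab with hlt | hlt
    · exact key a b ha.2 hlt ha.1 hb.1
    · exact key b a hb.2 hlt hb.1 ha.1
  have hearly : #{p ∈ S | ¬ i < p} ≤ i := by
    rw [← Fin.card_Iio i]
    refine card_le_card fun p hp => ?_
    simp only [S, mem_filter, mem_univ, true_and, not_lt] at hp
    exact mem_Iio.mpr (lt_of_le_of_ne hp.2 (by rintro rfl; exact lt_irrefl _ hp.1))
  calc (π i : ℕ) = #S := (card_filter_apply_lt π (π i)).symm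
    _ = #{p ∈ S | i < p} + #{p ∈ S | ¬ i < p} := (card_filter_add_card_filter_not _).symm
    _ ≤ i + 1 := by omega

theorem lt_apply_of_apply_lt_apply (hub : ∀ i, (π i : ℕ) ≤ i + 1) {b p : Fin n} (hb : π b ≤ b)
    (hp : π p < π b) : p < π b := by
  -- positions below `π b` are sent below `π b`, hence onto the values below `π b`
  have hmaps : (Iio (π b)).map π.toEmbedding ⊆ Iio (π b) := by
    simp only [subset_iff, mem_map, mem_Iio, toEmbedding_apply, forall_exists_index, and_imp]
    rintro _ q hq rfl
    have := hub q
    have := π.injective.ne (show q ≠ b by omega)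
    omega
  rw [← mem_Iio, ← map_eq_of_subset hmaps] at hp
  simpa [mem_map_equiv] using hp

theorem val_apply_eq_succ_of_apply_lt (hub : ∀ i, (π i : ℕ) ≤ i + 1) {b : Fin n} (hb : π b < b) :
    ∀ k, π b ≤ k → k < b → (π k : ℕ) = k + 1 := by
  intro k
  induction k using WellFoundedLT.induction with
  | _ k ih =>
  intro hbk hkb
  have hk := hub k
  have hkb' := π.injective.ne hkb.ne
  have hlow : π b ≤ π k := not_lt.mp fun hlt =>
    not_lt.mpr hbk (lt_apply_of_apply_lt_apply hub hb.le hlt)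
  by_contra hne
  -- the value `π k ∈ (π b, k]` is already taken by the position `π k - 1`
  let j : Fin n := ⟨π k - 1, by omega⟩
  have hj : (j : ℕ) = π k - 1 := rfl
  have := ih j (by omega) (by omega) (by omega)
  exact (show j ≠ k by omega) (π.injective (by omega))

theorem val_le_apply_succ_of_avoids312_mul_self (hub : ∀ i, (π i : ℕ) ≤ i + 1)
    (h : Avoids312 (π * π)) (b : Fin n) : (b : ℕ) ≤ π b + 1 := by
  by_contra! hbad
  have hchain := val_apply_eq_succ_of_apply_lt hub (b := b) (by omega)
  let J : Fin n := ⟨b - 1, by omega⟩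
  have hJ : (J : ℕ) = b - 1 := rfl
  have h1 : (π (π b) : ℕ) = π b + 1 := hchain (π b) le_rfl (by omega)
  have h2 : (π (π (π b)) : ℕ) = π b + 2 := by
    have := hchain (π (π b)) (by omega) (by omega)
    omega
  have h3 : π J = b := by
    have := hchain J (by omega) (by omega)
    omega
  refine h ⟨π b, J, b, by omega, by omega, ?_, ?_⟩ <;> simp only [mul_apply, h3] <;> omega

def MovesAtMostOne (π : Perm (Fin n)) : Prop :=
  ∀ i, (π i : ℕ) ≤ i + 1 ∧ (i : ℕ) ≤ π i + 1

namespace MovesAtMostOne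

theorem inv (h : π.MovesAtMostOne) : π⁻¹.MovesAtMostOne := fun i => by
  have := h (π⁻¹ i)
  simp only [coe_inv, apply_symm_apply] at this ⊢
  omega

theorem apply_apply_of_val_apply_eq_succ (h : π.MovesAtMostOne) (i : Fin n)
    (hi : (π i : ℕ) = i + 1) : π (π i) = i := by
  induction i using WellFoundedLT.induction with
  | _ i ih =>
  obtain ⟨p, rfl⟩ := π.surjective i
  have hp := h p
  have hne : p ≠ π p := fun he => by rw [← he] at hi; omega
  have hnlt : ¬ p < π p := fun hlt => by
    have := ih p hlt (by omega)
    rw [this] at hi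
    omega
  rw [show π (π p) = p by omega]

theorem apply_apply (h : π.MovesAtMostOne) (i : Fin n) : π (π i) = i := by
  rcases lt_trichotomy (π i) i with hlt | heq | hgt
  · have := h.inv.apply_apply_of_val_apply_eq_succ (π i) (by
      simp only [coe_inv, symm_apply_apply]; have := (h i).2; omega)
    simp only [coe_inv, symm_apply_apply, symm_apply_eq] at this
    exact this.symm
  · rw [heq, heq]
  · exact h.apply_apply_of_val_apply_eq_succ i (by have := (h i).1; omega)

theorem mul_self_eq_one (h : π.MovesAtMostOne) : π * π = 1 :=
  Equiv.ext h.apply_apply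

theorem avoids312 (h : π.MovesAtMostOne) : Avoids312 π := by
  rintro ⟨i, j, l, hij, hjl, h1, h2⟩
  have := (h i).1
  have := (h j).2
  omega

theorem avoids321 (h : π.MovesAtMostOne) : Avoids321 π := by
  rintro ⟨i, j, l, hij, hjl, h1, h2⟩
  have := (h i).1
  have := (h l).2
  omega

end MovesAtMostOne

theorem avoids_iff_movesAtMostOne (π : Perm (Fin n)) :
    Avoids312 π ∧ Avoids321 π ∧ Avoids312 (π * π) ↔ π.MovesAtMostOne := by
  refine ⟨fun ⟨h312, h321, hsq⟩ i => ?_, fun h => ⟨h.avoids312, h.avoids321, ?_⟩⟩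
  · have hub := val_apply_le_succ_of_avoids h312 h321
    exact ⟨hub i, val_le_apply_succ_of_avoids312_mul_self hub hsq i⟩
  · rw [h.mul_self_eq_one]
    rintro ⟨i, j, l, hij, hjl, -, hli⟩
    exact lt_irrefl i (hij.trans (hjl.trans hli))

theorem decomposeFin_symm_snd_of_apply_zero {π : Perm (Fin (n + 1))} {p : Fin (n + 1)}
    (h : π 0 = p) : decomposeFin.symm (p, (decomposeFin π).2) = π := by
  have hfst : (decomposeFin π).1 = π 0 := by
    conv_rhs => rw [← decomposeFin.symm_apply_apply π]
    exact (decomposeFin_symm_apply_zero _ _).symm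
  rw [decomposeFin.symm_apply_eq, ← h]
  exact Prod.ext hfst.symm rfl

theorem decomposeFin_symm_eq_swap_mul (p : Fin (n + 1)) (σ : Perm (Fin n)) :
    decomposeFin.symm (p, σ) = swap 0 p * decomposeFin.symm (0, σ) := by
  ext i
  induction i using Fin.cases <;> simp [decomposeFin_symm_apply_succ]

def decomposeFinFiber (P : Perm (Fin (n + 1)) → Prop) (p : Fin (n + 1)) :
    {π // P π ∧ π 0 = p} ≃ {σ : Perm (Fin n) // P (decomposeFin.symm (p, σ))} where
  toFun π := ⟨(decomposeFin π.1).2, by rw [decomposeFin_symm_snd_of_apply_zero π.2.2]; exact π.2.1⟩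
  invFun σ := ⟨decomposeFin.symm (p, σ), σ.2, decomposeFin_symm_apply_zero _ _⟩
  left_inv π := Subtype.ext (decomposeFin_symm_snd_of_apply_zero π.2.2)
  right_inv σ := Subtype.ext (by simp)

theorem movesAtMostOne_decomposeFin_symm_zero (σ : Perm (Fin n)) :
    (decomposeFin.symm (0, σ)).MovesAtMostOne ↔ σ.MovesAtMostOne := by
  simp [MovesAtMostOne, Fin.forall_fin_succ, decomposeFin_symm_apply_succ]

theorem movesAtMostOne_swap_zero_one_mul {ρ : Perm (Fin (n + 2))} (h0 : ρ 0 = 0) (h1 : ρ 1 = 1) :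
    (swap 0 1 * ρ).MovesAtMostOne ↔ ρ.MovesAtMostOne := by
  refine forall_congr' fun i => ?_
  by_cases hi0 : i = 0
  · subst hi0; simp [h0]
  by_cases hi1 : i = 1
  · subst hi1; simp [h1]
  rw [mul_apply, swap_apply_of_ne_of_ne (by rwa [← h0, ρ.injective.ne_iff])
    (by rwa [← h1, ρ.injective.ne_iff])]

theorem movesAtMostOne_decomposeFin_symm_one (σ : Perm (Fin (n + 1))) :
    (decomposeFin.symm (1, σ)).MovesAtMostOne ↔ σ.MovesAtMostOne ∧ σ 0 = 0 := by
  have key (h0 : σ 0 = 0) :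
      (decomposeFin.symm (1, σ)).MovesAtMostOne ↔ σ.MovesAtMostOne := by
    rw [decomposeFin_symm_eq_swap_mul, movesAtMostOne_swap_zero_one_mul
      (decomposeFin_symm_apply_zero _ _) (by simp [decomposeFin_symm_apply_one, h0]),
      movesAtMostOne_decomposeFin_symm_zero]
  refine ⟨fun h => ?_, fun ⟨h, h0⟩ => (key h0).mpr h⟩
  have h0 : σ 0 = 0 := by
    have := h.apply_apply 0
    rwa [decomposeFin_symm_apply_zero, decomposeFin_symm_apply_one, swap_apply_eq_iff,
      swap_apply_left, ← Fin.succ_zero_eq_one, Fin.succ_inj] at this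
  exact ⟨(key h0).mp h, h0⟩

theorem card_movesAtMostOne_add_two (n : ℕ) :
    Nat.card {π : Perm (Fin (n + 2)) // π.MovesAtMostOne} =
      Nat.card {σ : Perm (Fin (n + 1)) // σ.MovesAtMostOne} +
        Nat.card {τ : Perm (Fin n) // τ.MovesAtMostOne} := by
  classical
  have hsplit (π : Perm (Fin (n + 2))) : π.MovesAtMostOne ↔
      (π.MovesAtMostOne ∧ π 0 = 0) ∨ (π.MovesAtMostOne ∧ π 0 = 1) := by
    refine ⟨fun h => ?_, by rintro (⟨h, -⟩ | ⟨h, -⟩) <;> exact h⟩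
    rcases Nat.le_one_iff_eq_zero_or_eq_one.mp (h 0).1 with h0 | h0
    · exact .inl ⟨h, Fin.ext h0⟩
    · exact .inr ⟨h, Fin.ext h0⟩
  have hdisj : _root_.Disjoint (fun π : Perm (Fin (n + 2)) => π.MovesAtMostOne ∧ π 0 = 0)
      (fun π => π.MovesAtMostOne ∧ π 0 = 1) :=
    Pi.disjoint_iff.mpr fun π => Prop.disjoint_iff.mpr fun ⟨⟨_, h0⟩, ⟨_, h1⟩⟩ =>
      zero_ne_one (h0.symm.trans h1)
  rw [Nat.card_congr ((subtypeEquivRight hsplit).trans (subtypeOrEquiv _ _ hdisj)), Nat.card_sum,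
    Nat.card_congr (decomposeFinFiber _ 0), Nat.card_congr (decomposeFinFiber _ 1),
    Nat.card_congr (subtypeEquivRight movesAtMostOne_decomposeFin_symm_one),
    Nat.card_congr (decomposeFinFiber _ 0),
    Nat.card_congr (subtypeEquivRight movesAtMostOne_decomposeFin_symm_zero),
    Nat.card_congr (subtypeEquivRight movesAtMostOne_decomposeFin_symm_zero)]

theorem card_movesAtMostOne : ∀ n,
    Nat.card {π : Perm (Fin n) // π.MovesAtMostOne} = Nat.fib (n + 1)
  | 0 => by
    rw [Nat.card_congr (subtypeUnivEquiv fun π : Perm (Fin 0) =>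
      show π.MovesAtMostOne from fun i => i.elim0)]
    simp
  | 1 => by
    rw [Nat.card_congr (subtypeUnivEquiv fun π : Perm (Fin 1) =>
      show π.MovesAtMostOne from fun i => by simp [Subsingleton.elim (π i) i])]
    simp
  | n + 2 => by
    rw [card_movesAtMostOne_add_two, card_movesAtMostOne n, card_movesAtMostOne (n + 1),
      add_comm, ← Nat.fib_add_two]

end Equiv.Perm

theorem stmt8_general (n : ℕ) :
    Nat.card {π : Equiv.Perm (Fin n) // Avoids312 π ∧ Avoids321 π ∧ Avoids312 (π * π)} =
      Nat.fib (n + 1) := by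
  rw [Nat.card_congr (Equiv.subtypeEquivRight Perm.avoids_iff_movesAtMostOne)]
  exact Perm.card_movesAtMostOne n

theorem stmt8 (n : ℕ) (hn : 1 ≤ n) :
    Nat.card {π : Equiv.Perm (Fin n) // Avoids312 π ∧ Avoids321 π ∧ Avoids312 (π * π)} =
      Nat.fib (n + 1) :=
  stmt8_general n
end

section
/- For all n ≥ 1, the number of permutations π of [n] such that π avoids both patterns 312 and 213, and π² avoids 312, equals k²+1 if n = 2k and k²+k+1 if n = 2k+1. -/
open Equiv Finset

def Avoids213 {n : ℕ} (π : Equiv.Perm (Fin n)) : Prop :=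
  ¬ ∃ i j l : Fin n, i < j ∧ j < l ∧ π j < π i ∧ π i < π l

/-- the combined condition -/
def C1 {n : ℕ} (π : Equiv.Perm (Fin n)) : Prop :=
  ∀ i j l : Fin n, i < j → j < l → π j < π i → π l < π j

lemma c1_of_avoids {n : ℕ} {π : Equiv.Perm (Fin n)} (h3 : Avoids312 π) (h2 : Avoids213 π) :
    C1 π := by
  intro i j l hij hjl hji
  rcases lt_trichotomy (π l) (π j) with h | h | h
  · exact h
  · exact absurd (π.injective h) (ne_of_gt hjl)
  · exfalso
    rcases lt_trichotomy (π l) (π i) with h' | h' | h'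
    · exact h3 ⟨i, j, l, hij, hjl, h, h'⟩
    · exact absurd (π.injective h') (ne_of_gt (hij.trans hjl))
    · exact h2 ⟨i, j, l, hij, hjl, hji, h'⟩

lemma avoids312_of_c1 {n : ℕ} {π : Equiv.Perm (Fin n)} (h : C1 π) : Avoids312 π := by
  rintro ⟨i, j, l, hij, hjl, h1, h2⟩
  exact absurd (h i j l hij hjl (h1.trans h2)) (by omega)

lemma avoids213_of_c1 {n : ℕ} {π : Equiv.Perm (Fin n)} (h : C1 π) : Avoids213 π := by
  rintro ⟨i, j, l, hij, hjl, h1, h2⟩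
  exact absurd (h i j l hij hjl h1) (fun hc => absurd (h1.trans h2) (by omega))

/-- the family: identity on `[0,a)`, then `b` top values increasing, then decreasing tail -/
def fab (n a b i : ℕ) : ℕ :=
  if i < a then i else if i < a + b then i + (n - (a + b)) else n - 1 - (i - a)

lemma fab_lt {n a b : ℕ} (hb : 1 ≤ b) (hab : a + 2 * b ≤ n) {i : ℕ} (hi : i < n) :
    fab n a b i < n := by
  unfold fab; split_ifs <;> omega

lemma fab_inj {n a b : ℕ} (hb : 1 ≤ b) (hab : a + 2 * b ≤ n) {i j : ℕ}
    (hi : i < n) (hj : j < n) (h : fab n a b i = fab n a b j) : i = j := by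
  unfold fab at h; split_ifs at h <;> omega

/-- the family as a permutation -/
noncomputable def Fp (n a b : ℕ) (hb : 1 ≤ b) (hab : a + 2 * b ≤ n) : Equiv.Perm (Fin n) :=
  Equiv.ofBijective (fun i => ⟨fab n a b i.val, fab_lt hb hab i.isLt⟩)
    (Finite.injective_iff_bijective.mp (fun i j h => Fin.ext (fab_inj hb hab i.isLt j.isLt (by
      simpa using congrArg Fin.val h))))

lemma Fp_apply {n a b : ℕ} (hb : 1 ≤ b) (hab : a + 2 * b ≤ n) (i : Fin n) :
    ((Fp n a b hb hab) i : ℕ) = fab n a b i.val := rfl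

lemma fab_fab {n a b : ℕ} (hb : 1 ≤ b) (hab : a + 2 * b ≤ n) {i : ℕ} (hi : i < n) :
    fab n a b (fab n a b i) =
      if i < a then i else if i < a + b then 2 * a + b - 1 - i
        else if i < n - b then i else 2 * n - b - 1 - i := by
  unfold fab; split_ifs <;> omega

lemma gval_no312 {n a b : ℕ} (hb : 1 ≤ b) (hab : a + 2 * b ≤ n) {i j l : ℕ}
    (hi : i < n) (hj : j < n) (hl : l < n) (hij : i < j) (hjl : j < l) :
    ¬ ((if j < a then j else if j < a + b then 2 * a + b - 1 - j
        else if j < n - b then j else 2 * n - b - 1 - j) <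
       (if l < a then l else if l < a + b then 2 * a + b - 1 - l
        else if l < n - b then l else 2 * n - b - 1 - l) ∧
       (if l < a then l else if l < a + b then 2 * a + b - 1 - l
        else if l < n - b then l else 2 * n - b - 1 - l) <
       (if i < a then i else if i < a + b then 2 * a + b - 1 - i
        else if i < n - b then i else 2 * n - b - 1 - i)) := by
  split_ifs <;> omega

lemma fab_inc {n a b : ℕ} (hb : 1 ≤ b) (hab : a + 2 * b ≤ n) {i j : ℕ}
    (hij : i < j) (hj : j ≤ a + b - 1) : fab n a b i < fab n a b j := by
  unfold fab; split_ifs <;> omega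

lemma fab_dec {n a b : ℕ} (hb : 1 ≤ b) (hab : a + 2 * b ≤ n) {i j : ℕ}
    (hi : a + b - 1 ≤ i) (hij : i < j) (hj : j < n) : fab n a b j < fab n a b i := by
  unfold fab; split_ifs <;> omega

lemma Fp_c1 {n a b : ℕ} (hb : 1 ≤ b) (hab : a + 2 * b ≤ n) : C1 (Fp n a b hb hab) := by
  intro i j l hij hjl hji
  rw [Fin.lt_def] at *
  rw [Fp_apply, Fp_apply] at *
  by_cases hl : (l : ℕ) ≤ a + b - 1
  · have := fab_inc hb hab hij (show (j : ℕ) ≤ a + b - 1 by omega)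
    omega
  · by_cases hjp : a + b - 1 ≤ (j : ℕ)
    · exact fab_dec hb hab hjp hjl l.isLt
    · exact absurd (fab_inc hb hab hij (by omega)) (by omega)

lemma Fp_sq_avoids {n a b : ℕ} (hb : 1 ≤ b) (hab : a + 2 * b ≤ n) :
    Avoids312 (Fp n a b hb hab * Fp n a b hb hab) := by
  rintro ⟨i, j, l, hij, hjl, h1, h2⟩
  rw [Fin.lt_def] at *
  simp only [Equiv.Perm.mul_apply] at h1 h2
  rw [Fp_apply, Fp_apply, Fp_apply] at h1 h2
  simp only [Fp_apply] at h1 h2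
  rw [fab_fab hb hab j.isLt, fab_fab hb hab l.isLt] at h1
  rw [fab_fab hb hab l.isLt, fab_fab hb hab i.isLt] at h2
  exact gval_no312 hb hab i.isLt j.isLt l.isLt hij hjl ⟨h1, h2⟩

/-- ℕ-valued version of the permutation -/
def pfun {n : ℕ} (π : Equiv.Perm (Fin n)) (x : ℕ) : ℕ :=
  if h : x < n then (π ⟨x, h⟩ : ℕ) else 0

lemma pfun_pos {n : ℕ} (π : Equiv.Perm (Fin n)) {x : ℕ} (hx : x < n) :
    pfun π x = (π ⟨x, hx⟩ : ℕ) := dif_pos hx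

lemma pfun_lt {n : ℕ} (π : Equiv.Perm (Fin n)) {x : ℕ} (hx : x < n) : pfun π x < n := by
  rw [pfun_pos π hx]; exact (π ⟨x, hx⟩).isLt

lemma pfun_inj {n : ℕ} (π : Equiv.Perm (Fin n)) {x y : ℕ} (hx : x < n) (hy : y < n)
    (h : pfun π x = pfun π y) : x = y := by
  rw [pfun_pos π hx, pfun_pos π hy] at h
  have := π.injective (Fin.ext h)
  simpa using congrArg Fin.val this

theorem classify {n : ℕ} {π : Equiv.Perm (Fin n)} (hn : 1 ≤ n) (h1 : C1 π)
    (h2 : Avoids312 (π * π)) (hne : π ≠ 1) :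
    ∃ a b, 1 ≤ b ∧ a + 2 * b ≤ n ∧ ∀ i : Fin n, (π i : ℕ) = fab n a b i.val := by
  set p : ℕ → ℕ := pfun π with hpdef
  have pbound : ∀ x, x < n → p x < n := fun x hx => pfun_lt π hx
  have pinj : ∀ x y, x < n → y < n → p x = p y → x = y :=
    fun x y hx hy h => pfun_inj π hx hy h
  have psurj : ∀ v, v < n → ∃ x, x < n ∧ p x = v := by
    intro v hv
    refine ⟨(π.symm ⟨v, hv⟩).val, (π.symm ⟨v, hv⟩).isLt, ?_⟩
    rw [hpdef, pfun_pos π (π.symm ⟨v, hv⟩).isLt]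
    simp
  have hC1' : ∀ i j l, i < j → j < l → l < n → p j < p i → p l < p j := by
    intro i j l hij hjl hln hji
    have hjn : j < n := hjl.trans hln
    have hin : i < n := hij.trans hjn
    have := h1 ⟨i, hin⟩ ⟨j, hjn⟩ ⟨l, hln⟩ (Fin.mk_lt_mk.mpr hij) (Fin.mk_lt_mk.mpr hjl)
      (by rw [Fin.lt_def]; rw [hpdef, pfun_pos π hjn, pfun_pos π hin] at hji; exact hji)
    rw [Fin.lt_def] at this
    rw [hpdef, pfun_pos π hjn, pfun_pos π hln]
    exact this
  have hpp : ∀ x (hx : x < n), p (p x) = ((π * π) ⟨x, hx⟩ : ℕ) := by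
    intro x hx
    rw [hpdef, pfun_pos π hx, pfun_pos π (π ⟨x, hx⟩).isLt, Equiv.Perm.mul_apply]
  have hS' : ∀ i j l, i < j → j < l → l < n →
      p (p j) < p (p l) → p (p l) < p (p i) → False := by
    intro i j l hij hjl hln ha hb
    have hjn : j < n := hjl.trans hln
    have hin : i < n := hij.trans hjn
    rw [hpp j hjn, hpp l hln] at ha
    rw [hpp l hln, hpp i hin] at hb
    exact h2 ⟨⟨i, hin⟩, ⟨j, hjn⟩, ⟨l, hln⟩, Fin.mk_lt_mk.mpr hij, Fin.mk_lt_mk.mpr hjl,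
      Fin.lt_def.mpr ha, Fin.lt_def.mpr hb⟩
  -- least non-fixed point
  have hex : ∃ x, x < n ∧ p x ≠ x := by
    by_contra hc
    push_neg at hc
    apply hne
    apply Equiv.ext
    intro i
    have h' := hc i.val i.isLt
    rw [hpdef, pfun_pos π i.isLt] at h'
    rw [Equiv.Perm.one_apply]
    exact Fin.ext (by simpa using h')
  set A := Nat.find hex with hAdef
  obtain ⟨hAn, hAne⟩ := Nat.find_spec hex
  have hfix : ∀ y, y < A → p y = y := by
    intro y hy
    have := Nat.find_min hex hy
    push_neg at this
    exact this (by omega)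
  have hAlt : A < p A := by
    rcases lt_trichotomy (p A) A with h | h | h
    · exfalso
      have h2' := hfix (p A) h
      exact hAne (pinj _ _ (pbound A hAn) hAn h2')
    · exact absurd h hAne
    · exact h
  set V := p A with hVdef
  have hVn : V < n := pbound A hAn
  obtain ⟨P, hPn, hP⟩ := psurj (n - 1) (by omega)
  -- increasing up to P
  have U2 : ∀ i j, i < j → j ≤ P → p i < p j := by
    intro i j hij hjP
    have hjn : j < n := lt_of_le_of_lt hjP hPn
    have hin : i < n := hij.trans hjn
    rcases lt_trichotomy (p i) (p j) with h | h | h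
    · exact h
    · exact absurd (pinj _ _ hin hjn h) (by omega)
    · exfalso
      rcases eq_or_lt_of_le hjP with he | hl
      · have h3 : p j = n - 1 := by rw [he, hP]
        have := pbound i hin
        omega
      · have hcp := hC1' i j P hij hl hPn h
        rw [hP] at hcp
        have := pbound j hjn
        omega
  -- decreasing from P
  have U1 : ∀ j l, P ≤ j → j < l → l < n → p l < p j := by
    intro j l hPj hjl hln
    rcases eq_or_lt_of_le hPj with he | hl
    · subst he
      have h1' : p l ≠ n - 1 := by
        intro hc
        have := pinj l P hln hPn (by omega)
        omega
      have := pbound l hln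
      omega
    · have hj : p j < p P := by
        rcases lt_trichotomy (p j) (p P) with h | h | h
        · exact h
        · exact absurd (pinj _ _ (hjl.trans hln) hPn h) (by omega)
        · have := pbound j (hjl.trans hln); omega
      exact hC1' P j l hl hjl hln hj
  have hAP : A ≤ P := by
    by_contra hc
    push_neg at hc
    have := hfix P hc
    omega
  have hPlt : P < n - 1 := by
    rcases lt_or_ge P (n - 1) with h | h
    · exact h
    · exfalso
      have hPe : P = n - 1 := by omega
      have hge : ∀ x, x < n → x ≤ p x := by
        intro x
        induction x with
        | zero => omega
        | succ x ih =>
          intro hx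
          have := U2 x (x + 1) (by omega) (by omega)
          have := ih (by omega)
          omega
      have hle : ∀ d, d ≤ n - 1 → p (n - 1 - d) ≤ n - 1 - d := by
        intro d
        induction d with
        | zero =>
          intro _
          simp only [Nat.sub_zero]
          have := pbound (n - 1) (by omega)
          omega
        | succ d ih =>
          intro hd
          have h1' := U2 (n - 1 - (d + 1)) (n - 1 - d) (by omega) (by omega)
          have := ih (by omega)
          omega
      have h1' := hge A hAn
      have h2' := hle (n - 1 - A) (by omega)
      rw [show n - 1 - (n - 1 - A) = A by omega] at h2'
      omega
  have hlast : p (n - 1) = A := by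
    obtain ⟨t, htn, ht⟩ := psurj A hAn
    rcases eq_or_ne t (n - 1) with he | hne'
    · subst he; exact ht
    have hu : A < p (n - 1) := by
      have h1' : p (n - 1) ≠ A := by
        intro hc
        exact hne' (pinj t (n - 1) htn (by omega) (by omega))
      rcases lt_or_ge (p (n - 1)) A with h | h
      · exfalso
        have := hfix (p (n - 1)) h
        have := pinj (p (n - 1)) (n - 1) (by omega) (by omega) this
        omega
      · omega
    have htP : P < t := by
      rcases lt_trichotomy t A with h | h | h
      · have := hfix t h; omega
      · exfalso; subst h; omega
      · rcases lt_or_ge P t with h' | h'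
        · exact h'
        · exfalso
          have := U2 A t h (by omega)
          omega
    have := U1 t (n - 1) (by omega) (by omega) (by omega)
    omega
  have hblockge : ∀ d, A + d ≤ P → V + d ≤ p (A + d) := by
    intro d
    induction d with
    | zero => intro _; simp only [Nat.add_zero]; omega
    | succ d ih =>
      intro hd
      rw [show A + (d + 1) = A + d + 1 by omega]
      have h1' := U2 (A + d) (A + d + 1) (by omega) (by omega)
      have := ih (by omega)
      omega
  have htailge : ∀ d, d ≤ n - 1 - P → A + d ≤ p (n - 1 - d) := by
    intro d
    induction d with
    | zero => intro _; simp only [Nat.add_zero, Nat.sub_zero]; omega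
    | succ d ih =>
      intro hd
      have h1' := U1 (n - 1 - (d + 1)) (n - 1 - d) (by omega) (by omega) (by omega)
      have := ih (by omega)
      omega
  have hPV : P < V := by
    rcases eq_or_lt_of_le hAP with he | hl
    · omega
    · have hpVle : p V ≤ V := by
        by_contra hc
        push_neg at hc
        refine hS' A P (n - 1) hl hPlt (by omega) ?_ ?_
        · rw [hP, hlast]
          omega
        · rw [hlast, ← hVdef]
          exact hc
      rcases lt_or_ge P V with h | h
      · exact h
      · exfalso
        have := hblockge (V - A) (by omega)
        rw [show A + (V - A) = V by omega] at this
        omega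
  have hP1n : P + 1 < n := by omega
  have hP1V : p (P + 1) < V := by
    rcases eq_or_lt_of_le hAP with he | hl
    · have hVe : V = n - 1 := by rw [hVdef, he, hP]
      have h1' : p (P + 1) ≠ n - 1 := by
        intro hc
        have := pinj (P + 1) P hP1n hPn (by omega)
        omega
      have := pbound (P + 1) hP1n
      omega
    · by_contra hc
      push_neg at hc
      set W := p (P + 1) with hWdef
      have hWn : W < n := pbound (P + 1) hP1n
      have hWV : V < W := by
        rcases eq_or_lt_of_le hc with he | h
        · exfalso
          have := pinj A (P + 1) hAn hP1n (by omega)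
          omega
        · exact h
      refine hS' A P (P + 1) hl (by omega) hP1n ?_ ?_
      · rw [hP, hlast, ← hWdef]
        have h1' : A ≤ p W := by
          rcases lt_or_ge (p W) A with h | h
          · exfalso
            have := hfix (p W) h
            have := pinj (p W) W (by omega) hWn this
            omega
          · exact h
        have h2' : p W ≠ A := by
          intro hc2
          have := pinj W (n - 1) hWn (by omega) (by omega)
          have : p (P + 1) = p P := by omega
          have := pinj (P + 1) P hP1n hPn this
          omega
        omega
      · rw [← hWdef, ← hVdef]
        exact U1 V W (by omega) hWV hWn
  have hPA : P = A + (n - 1 - V) := by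
    have h1' := hblockge (P - A) (by omega)
    rw [show A + (P - A) = P by omega, hP] at h1'
    have h2' := htailge (n - 1 - (P + 1)) (by omega)
    rw [show n - 1 - (n - 1 - (P + 1)) = P + 1 by omega] at h2'
    omega
  have hblockle : ∀ e, e ≤ P - A → p (P - e) ≤ n - 1 - e := by
    intro e
    induction e with
    | zero => intro _; simp only [Nat.sub_zero]; omega
    | succ e ih =>
      intro he
      have h1' := U2 (P - (e + 1)) (P - e) (by omega) (by omega)
      have := ih (by omega)
      omega
  have htaille : ∀ d, P + 1 + d < n → p (P + 1 + d) + d ≤ p (P + 1) := by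
    intro d
    induction d with
    | zero => intro _; simp only [Nat.add_zero]; omega
    | succ d ih =>
      intro hd
      rw [show P + 1 + (d + 1) = P + 1 + d + 1 by omega]
      have h1' := U1 (P + 1 + d) (P + 1 + d + 1) (by omega) (by omega) (by omega)
      have := ih (by omega)
      omega
  refine ⟨A, n - V, by omega, by omega, ?_⟩
  intro i
  have hx : i.val < n := i.isLt
  have hpi : p i.val = (π i : ℕ) := by
    rw [hpdef, pfun_pos π hx]
  rw [← hpi]
  unfold fab
  split_ifs with hc1 hc2
  · exact hfix i.val hc1
  · -- block: A ≤ i < A + (n - V), value V + (i - A)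
    have hiP : i.val ≤ P := by omega
    have hg := hblockge (i.val - A) (by omega)
    rw [show A + (i.val - A) = i.val by omega] at hg
    have hl := hblockle (P - i.val) (by omega)
    rw [show P - (P - i.val) = i.val by omega] at hl
    omega
  · -- tail: i ≥ A + (n - V) = P + 1, value n - 1 - (i - A)
    have hiP : P + 1 ≤ i.val := by omega
    have hg := htailge (n - 1 - i.val) (by omega)
    rw [show n - 1 - (n - 1 - i.val) = i.val by omega] at hg
    have hl := htaille (i.val - (P + 1)) (by omega)
    rw [show P + 1 + (i.val - (P + 1)) = i.val by omega] at hl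
    have hP1ge := htailge (n - 1 - (P + 1)) (by omega)
    rw [show n - 1 - (n - 1 - (P + 1)) = P + 1 by omega] at hP1ge
    omega

noncomputable def FpT (n : ℕ) (q : ℕ × ℕ) : Equiv.Perm (Fin n) :=
  if h : 1 ≤ q.2 ∧ q.1 + 2 * q.2 ≤ n then Fp n q.1 q.2 h.1 h.2 else 1

def idx (n : ℕ) : Finset (ℕ × ℕ) :=
  (Finset.range n ×ˢ Finset.range n).filter (fun q => 1 ≤ q.2 ∧ q.1 + 2 * q.2 ≤ n)

lemma mem_idx {n : ℕ} (q : ℕ × ℕ) : q ∈ idx n ↔ 1 ≤ q.2 ∧ q.1 + 2 * q.2 ≤ n := by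
  simp only [idx, Finset.mem_filter, Finset.mem_product, Finset.mem_range]
  omega

lemma one_c1 {n : ℕ} : C1 (1 : Equiv.Perm (Fin n)) := by
  intro i j l hij hjl hji
  simp only [Equiv.Perm.one_apply] at hji ⊢
  exact absurd (hij.trans hji) (lt_irrefl i)

lemma filter_eq {n : ℕ} (hn : 1 ≤ n) :
    {π : Equiv.Perm (Fin n) | Avoids312 π ∧ Avoids213 π ∧ Avoids312 (π * π)} =
      ↑(insert (1 : Equiv.Perm (Fin n)) ((idx n).image (FpT n))) := by
  ext π
  simp only [Set.mem_setOf_eq, Finset.coe_insert, Set.mem_insert_iff, Finset.coe_image,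
    Set.mem_image, Finset.mem_coe]
  constructor
  · rintro ⟨h312, h213, hsq⟩
    by_cases hne : π = 1
    · exact Or.inl hne
    · right
      obtain ⟨a, b, hb, hab, hval⟩ := classify hn (c1_of_avoids h312 h213) hsq hne
      refine ⟨(a, b), (mem_idx _).mpr ⟨hb, hab⟩, ?_⟩
      rw [FpT, dif_pos (⟨hb, hab⟩ : 1 ≤ (a, b).2 ∧ (a, b).1 + 2 * (a, b).2 ≤ n)]
      apply Equiv.ext
      intro i
      apply Fin.ext
      rw [Fp_apply, hval i]
  · rintro (rfl | ⟨q, hq, rfl⟩)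
    · exact ⟨avoids312_of_c1 one_c1, avoids213_of_c1 one_c1, by rw [one_mul]; exact avoids312_of_c1 one_c1⟩
    · obtain ⟨hb, hab⟩ := (mem_idx q).mp hq
      rw [FpT, dif_pos ⟨hb, hab⟩]
      exact ⟨avoids312_of_c1 (Fp_c1 hb hab), avoids213_of_c1 (Fp_c1 hb hab), Fp_sq_avoids hb hab⟩

lemma one_not_mem {n : ℕ} : (1 : Equiv.Perm (Fin n)) ∉ (idx n).image (FpT n) := by
  intro hmem
  obtain ⟨q, hq, heq⟩ := Finset.mem_image.mp hmem
  obtain ⟨hb, hab⟩ := (mem_idx q).mp hq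
  rw [FpT, dif_pos ⟨hb, hab⟩] at heq
  have hq1 : q.1 < n := by omega
  have := congrArg Fin.val (Equiv.ext_iff.mp heq ⟨q.1, hq1⟩)
  rw [Fp_apply] at this
  simp only [Equiv.Perm.one_apply] at this
  unfold fab at this
  split_ifs at this <;> omega

lemma FpT_injOn {n : ℕ} : Set.InjOn (FpT n) ↑(idx n) := by
  intro q hq r hr heq
  obtain ⟨hqb, hqab⟩ := (mem_idx q).mp (Finset.mem_coe.mp hq)
  obtain ⟨hrb, hrab⟩ := (mem_idx r).mp (Finset.mem_coe.mp hr)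
  rw [FpT, FpT, dif_pos ⟨hqb, hqab⟩, dif_pos ⟨hrb, hrab⟩] at heq
  have key : ∀ x, x < n → fab n q.1 q.2 x = fab n r.1 r.2 x := by
    intro x hx
    have := congrArg Fin.val (Equiv.ext_iff.mp heq ⟨x, hx⟩)
    rwa [Fp_apply, Fp_apply] at this
  have h1 := key q.1 (by omega)
  have h2 := key r.1 (by omega)
  unfold fab at h1 h2
  have e1 : q.1 = r.1 := by split_ifs at h1 h2 <;> omega
  have e2 : q.2 = r.2 := by split_ifs at h1 h2 <;> omega
  exact Prod.ext e1 e2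

lemma sum_aux {n : ℕ} : ∀ m, 2 * m ≤ n →
    ∑ b ∈ Finset.Ioc 0 m, (n + 1 - 2 * b) = m * (n + 1) - m * (m + 1) := by
  intro m
  induction m with
  | zero => intro _; simp
  | succ m ih =>
    intro hm
    rw [Finset.sum_Ioc_succ_top (Nat.zero_le _), ih (by omega)]
    have le1 : m * (m + 1) ≤ m * (n + 1) := Nat.mul_le_mul_left _ (by omega)
    have le2 : (m + 1) * (m + 2) ≤ (m + 1) * (n + 1) := Nat.mul_le_mul_left _ (by omega)
    zify [le1, le2, show 2 * (m + 1) ≤ n + 1 by omega]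
    ring

lemma idx_card {n : ℕ} : (idx n).card = (n / 2) * (n - n / 2) := by
  have hset : idx n = (Finset.Ioc 0 (n / 2)).biUnion
      (fun b => (Finset.range (n + 1 - 2 * b)).image (fun a => (a, b))) := by
    ext q
    simp only [mem_idx, Finset.mem_biUnion, Finset.mem_Ioc, Finset.mem_image, Finset.mem_range,
      Prod.ext_iff]
    constructor
    · rintro ⟨h1, h2⟩
      exact ⟨q.2, ⟨h1, by omega⟩, q.1, by omega, rfl, rfl⟩
    · rintro ⟨b, ⟨hb0, hbn⟩, a, ha, he1, he2⟩
      omega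
  rw [hset, Finset.card_biUnion]
  · have : ∀ b ∈ Finset.Ioc 0 (n / 2),
        ((Finset.range (n + 1 - 2 * b)).image (fun a => (a, b))).card = n + 1 - 2 * b := by
      intro b _
      rw [Finset.card_image_of_injective _ (fun a a' h => (Prod.ext_iff.mp h).1),
        Finset.card_range]
    rw [Finset.sum_congr rfl this, sum_aux (n / 2) (by omega)]
    have h2k : n / 2 ≤ n := Nat.div_le_self n 2
    zify [Nat.mul_le_mul_left (n / 2) (show n / 2 + 1 ≤ n + 1 by omega), h2k]
    ring
  · intro b hb b' hb' hne
    simp only [Finset.disjoint_left, Finset.mem_image, Finset.mem_range]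
    rintro q ⟨a, ha, rfl⟩ ⟨a', ha', he⟩
    exact hne (Prod.ext_iff.mp he).2.symm

theorem main_count {n : ℕ} (hn : 1 ≤ n) :
    Nat.card {π : Equiv.Perm (Fin n) // Avoids312 π ∧ Avoids213 π ∧ Avoids312 (π * π)} =
      (n / 2) * (n - n / 2) + 1 := by
  have e0 : Nat.card {π : Equiv.Perm (Fin n) // Avoids312 π ∧ Avoids213 π ∧ Avoids312 (π * π)} =
      Set.ncard {π : Equiv.Perm (Fin n) | Avoids312 π ∧ Avoids213 π ∧ Avoids312 (π * π)} :=
    Nat.card_coe_set_eq _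
  rw [e0, filter_eq hn, Set.ncard_coe_finset,
    Finset.card_insert_of_notMem one_not_mem,
    Finset.card_image_of_injOn FpT_injOn, idx_card]

theorem stmt9 (n : ℕ) (hn : 1 ≤ n) (k : ℕ) :
    (n = 2 * k →
      Nat.card {π : Equiv.Perm (Fin n) // Avoids312 π ∧ Avoids213 π ∧ Avoids312 (π * π)} =
        k ^ 2 + 1) ∧
    (n = 2 * k + 1 →
      Nat.card {π : Equiv.Perm (Fin n) // Avoids312 π ∧ Avoids213 π ∧ Avoids312 (π * π)} =
        k ^ 2 + k + 1) := by
  constructor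
  · intro h
    subst h
    rw [main_count hn, show 2 * k / 2 = k by omega, show 2 * k - k = k by omega]
    ring
  · intro h
    subst h
    rw [main_count hn, show (2 * k + 1) / 2 = k by omega,
      show 2 * k + 1 - k = k + 1 by omega]
    ring
end

section
/- For all n ≥ 1, the number of permutations π of [n] such that π avoids both patterns 312 and 231, and π² avoids 312, equals 2^{n−1}. -/
open Equiv Finset

def Avoids231 {n : ℕ} (π : Equiv.Perm (Fin n)) : Prop :=
  ¬ ∃ i j l : Fin n, i < j ∧ j < l ∧ π l < π i ∧ π i < π j

namespace St10

/-- boundary predicate on ℕ: 0 is always a boundary; t∈[1,n) is a boundary iff g (t-1). -/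
def BdB (n : ℕ) (g : Fin (n-1) → Bool) (t : ℕ) : Bool :=
  t == 0 || (if h : 1 ≤ t ∧ t < n then g ⟨t-1, by omega⟩ else false)

lemma bd_zero (n : ℕ) (g : Fin (n-1) → Bool) : BdB n g 0 = true := by simp [BdB]

lemma bd_succ (n : ℕ) (g : Fin (n-1) → Bool) (t : ℕ) (ht : t + 1 < n) :
    BdB n g (t+1) = g ⟨t, by omega⟩ := by
  simp [BdB, ht]

/-- largest boundary ≤ i -/
def aF (n : ℕ) (g : Fin (n-1) → Bool) (i : ℕ) : ℕ :=
  Nat.findGreatest (fun t => BdB n g t = true) i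

/-- smallest boundary (or n) > i -/
def bF (n : ℕ) (g : Fin (n-1) → Bool) (i : ℕ) : ℕ :=
  Nat.find (p := fun t => i < t ∧ (BdB n g t = true ∨ n ≤ t))
    ⟨max (i+1) n, by constructor <;> omega⟩

variable {n : ℕ} {g : Fin (n-1) → Bool}

lemma a_le (i : ℕ) : aF n g i ≤ i := Nat.findGreatest_le i

lemma a_bd (i : ℕ) : BdB n g (aF n g i) = true := by
  unfold aF
  exact Nat.findGreatest_spec (P := fun t => BdB n g t = true) (Nat.zero_le i) (bd_zero n g)

lemma a_max {t i : ℕ} (h1 : t ≤ i) (h2 : BdB n g t = true) : t ≤ aF n g i :=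
  Nat.le_findGreatest h1 h2

lemma b_spec (i : ℕ) : i < bF n g i ∧ (BdB n g (bF n g i) = true ∨ n ≤ bF n g i) := by
  unfold bF
  exact Nat.find_spec (p := fun t => i < t ∧ (BdB n g t = true ∨ n ≤ t))
    ⟨max (i+1) n, by constructor <;> omega⟩

lemma b_gt (i : ℕ) : i < bF n g i := (b_spec i).1

lemma b_le (i : ℕ) (hi : i < n) : bF n g i ≤ n :=
  Nat.find_min' _ ⟨hi, Or.inr le_rfl⟩

lemma b_min {t i : ℕ} (h1 : i < t) (h2 : BdB n g t = true) : bF n g i ≤ t :=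
  Nat.find_min' _ ⟨h1, Or.inl h2⟩

lemma b_min' {t i : ℕ} (h1 : i < t) (h2 : n ≤ t) : bF n g i ≤ t :=
  Nat.find_min' _ ⟨h1, Or.inr h2⟩

lemma no_bd_between {i t : ℕ} (h1 : aF n g i < t) (h2 : t < bF n g i) :
    BdB n g t = false := by
  by_contra h
  rw [Bool.not_eq_false] at h
  rcases le_or_gt t i with hti | hti
  · exact absurd (a_max hti h) (by omega)
  · exact absurd (b_min hti h) (by omega)

lemma layer_const {i j : ℕ} (hi : i < n) (h1 : aF n g i ≤ j) (h2 : j < bF n g i) :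
    aF n g j = aF n g i ∧ bF n g j = bF n g i := by
  have hbn := b_le (g := g) i hi
  have ha1 : aF n g i ≤ aF n g j := a_max h1 (a_bd i)
  have ha2 : aF n g j ≤ j := a_le j
  have ha : aF n g j = aF n g i := by
    by_contra hne
    have hlt : aF n g i < aF n g j := by omega
    have hff := no_bd_between (i := i) hlt (by omega)
    have htt := a_bd (n := n) (g := g) j
    rw [hff] at htt
    exact absurd htt (by simp)
  refine ⟨ha, ?_⟩
  have hb1 : bF n g j ≤ bF n g i := by
    rcases (b_spec (g := g) i).2 with h | h
    · exact b_min h2 h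
    · exact b_min' h2 h
  have hbj : j < bF n g j := b_gt j
  by_contra hne
  have hlt : bF n g j < bF n g i := by omega
  have hgt : aF n g i < bF n g j := by omega
  have hff := no_bd_between (i := i) hgt hlt
  rcases (b_spec (g := g) j).2 with h | h
  · rw [hff] at h; exact absurd h (by simp)
  · omega

/-- the value of the layered permutation at i -/
def vF (n : ℕ) (g : Fin (n-1) → Bool) (i : ℕ) : ℕ := aF n g i + bF n g i - 1 - i

lemma v_bounds (i : ℕ) (hi : i < n) :
    aF n g i ≤ vF n g i ∧ vF n g i < bF n g i := by
  have h1 := a_le (g := g) i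
  have h2 := b_gt (g := g) i
  unfold vF; omega

lemma v_lt (i : ℕ) (hi : i < n) : vF n g i < n := by
  have := v_bounds (g := g) i hi
  have := b_le (g := g) i hi
  omega

lemma v_invol (i : ℕ) (hi : i < n) : vF n g (vF n g i) = i := by
  have hb := v_bounds (g := g) i hi
  have hc := layer_const (g := g) hi hb.1 hb.2
  have h1 := a_le (g := g) i
  have h2 := b_gt (g := g) i
  unfold vF at *
  omega

end St10

namespace St10
variable {n : ℕ} {g : Fin (n-1) → Bool}

def FB (n : ℕ) (g : Fin (n-1) → Bool) : Fin n → Fin n :=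
  fun i => ⟨vF n g i, v_lt i i.isLt⟩

lemma FB_invol : Function.Involutive (FB n g) := by
  intro i
  apply Fin.ext
  exact v_invol i i.isLt

/-- the layered permutation associated to g -/
def Φ (n : ℕ) (g : Fin (n-1) → Bool) : Equiv.Perm (Fin n) :=
  Function.Involutive.toPerm (FB n g) FB_invol

lemma Φ_apply (i : Fin n) : ((Φ n g i : Fin n) : ℕ) = vF n g i := rfl

/-- cross-layer: different layers increase -/
lemma cross_lt {i j : ℕ} (hj : j < n) (hij : bF n g i ≤ j) :
    vF n g i < vF n g j := by
  have hb : BdB n g (bF n g i) = true := by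
    rcases (b_spec (g := g) i).2 with h | h
    · exact h
    · omega
  have h1 : bF n g i ≤ aF n g j := a_max hij hb
  have h2 := (v_bounds (g := g) j hj).1
  have h3 := (v_bounds (g := g) i (by have := b_gt (g := g) i; omega)).2
  omega

lemma Φ_av231 : Avoids231 (Φ n g) := by
  rintro ⟨i, j, l, hij, hjl, h1, h2⟩
  rw [Fin.lt_def] at hij hjl h1 h2
  rw [Φ_apply, Φ_apply] at h1 h2
  -- v l < v i < v j, i < j < l
  -- v i < v j with i < j forces bF i ≤ j (else same layer decreasing)
  have hbij : bF n g i ≤ (j : ℕ) := by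
    by_contra hc
    push_neg at hc
    have hcon := layer_const (g := g) i.isLt (le_trans (a_le i) (le_of_lt hij)) hc
    unfold vF at h2
    rw [hcon.1, hcon.2] at h2
    have := a_le (g := g) (i : ℕ)
    have := b_gt (g := g) (i : ℕ)
    omega
  have : vF n g i < vF n g l := cross_lt l.isLt (by omega)
  omega

lemma Φ_av312 : Avoids312 (Φ n g) := by
  rintro ⟨i, j, l, hij, hjl, h1, h2⟩
  rw [Fin.lt_def] at hij hjl h1 h2
  rw [Φ_apply, Φ_apply] at h1 h2
  -- v j < v l, j < l
  have hbjl : bF n g j ≤ (l : ℕ) := by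
    by_contra hc
    push_neg at hc
    have hcon := layer_const (g := g) j.isLt (le_trans (a_le j) (le_of_lt hjl)) hc
    unfold vF at h1
    rw [hcon.1, hcon.2] at h1
    have := a_le (g := g) (j : ℕ)
    have := b_gt (g := g) (j : ℕ)
    omega
  -- v l < v i, i < l : must be same layer
  have hcil : (l : ℕ) < bF n g i := by
    by_contra hc
    push_neg at hc
    have := cross_lt (g := g) l.isLt hc
    omega
  have hcon := layer_const (g := g) i.isLt (le_trans (a_le i) (by omega)) hcil
  -- boundary bF j strictly inside layer of l
  have hb : BdB n g (bF n g j) = true := by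
    rcases (b_spec (g := g) j).2 with h | h
    · exact h
    · have := l.isLt; omega
  have hff := no_bd_between (i := (l : ℕ)) (t := bF n g j)
    (by rw [hcon.1]; have := a_le (g := g) (i : ℕ); have := b_gt (g := g) (j : ℕ); omega)
    (by rw [hcon.2]; have := b_gt (g := g) (l : ℕ); omega)
  rw [hff] at hb; exact absurd hb (by simp)

lemma Φ_sq : Φ n g * Φ n g = 1 := by
  ext i
  simp [Φ, Equiv.Perm.mul_apply]
  exact congrArg Fin.val (FB_invol i)

lemma av312_one : Avoids312 (1 : Equiv.Perm (Fin n)) := by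
  rintro ⟨i, j, l, hij, hjl, h1, h2⟩
  simp at h1 h2
  exact absurd (lt_trans (lt_trans hij hjl) h2) (lt_irrefl _)

/-- ascent characterization of Φ -/
lemma Φ_ascent (t : ℕ) (ht : t + 1 < n) :
    (vF n g t < vF n g (t+1)) ↔ g ⟨t, by omega⟩ = true := by
  rw [← bd_succ n g t ht]
  constructor
  · intro h
    -- not same layer, so bF t ≤ t+1, so bF t = t+1, which is a boundary
    have hbt : bF n g t ≤ t + 1 := by
      by_contra hc
      push_neg at hc
      have hcon := layer_const (g := g) (i := t) (by omega) (le_trans (a_le t) (by omega)) hc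
      unfold vF at h
      rw [hcon.1, hcon.2] at h
      have := a_le (g := g) t
      have := b_gt (g := g) t
      omega
    have hbt' : bF n g t = t + 1 := by have := b_gt (g := g) t; omega
    rcases (b_spec (g := g) t).2 with hb | hb
    · rw [hbt'] at hb; exact hb
    · omega
  · intro h
    have hbt : bF n g t = t + 1 := by
      have h1 := b_min (i := t) (t := t+1) (by omega) h
      have := b_gt (g := g) t
      omega
    exact cross_lt (by omega) (by omega)


lemma card_lt_coe (a : ℕ) (ha : a ≤ n) :
    (univ.filter (fun j : Fin n => (j : ℕ) < a)).card = a := by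
  have h : ∀ m ∈ Finset.range a, m < n := fun m hm => lt_of_lt_of_le (mem_range.mp hm) ha
  have : univ.filter (fun j : Fin n => (j : ℕ) < a) = (Finset.range a).attachFin h := by
    ext j
    simp [mem_attachFin]
  rw [this, card_attachFin, card_range]

lemma card_ge_coe (b : ℕ) (hb : b ≤ n) :
    (univ.filter (fun j : Fin n => b ≤ (j : ℕ))).card = n - b := by
  have h := Finset.card_filter_add_card_filter_not
    (s := (univ : Finset (Fin n))) (p := fun j : Fin n => (j : ℕ) < b)
  rw [card_lt_coe b hb] at h
  have h2 : univ.filter (fun j : Fin n => ¬ (j : ℕ) < b)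
      = univ.filter (fun j : Fin n => b ≤ (j : ℕ)) := by
    ext j; simp [Nat.not_lt]
  rw [h2] at h
  simp at h
  omega

/-- descents are by exactly one -/
lemma factD (π : Equiv.Perm (Fin n)) (h312 : Avoids312 π) (h231 : Avoids231 π)
    (i j : Fin n) (hij : (i : ℕ) + 1 = (j : ℕ)) (hd : π j < π i) :
    (π j : ℕ) + 1 = (π i : ℕ) := by
  by_contra hc
  rw [Fin.lt_def] at hd
  have h1 : (π j : ℕ) + 1 < (π i : ℕ) := by omega
  have hvlt : (π i : ℕ) - 1 < n := by have := (π i).isLt; omega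
  set v : Fin n := ⟨(π i : ℕ) - 1, hvlt⟩ with hv
  set p := π.symm v with hp
  have hpval : (π p : ℕ) = (π i : ℕ) - 1 := by
    rw [hp, π.apply_symm_apply, hv]
  have hpi : (p : ℕ) ≠ (i : ℕ) := by
    intro h
    have : p = i := Fin.ext h
    rw [this] at hpval
    omega
  have hpj : (p : ℕ) ≠ (j : ℕ) := by
    intro h
    have : p = j := Fin.ext h
    rw [this] at hpval
    omega
  rcases Nat.lt_or_ge (p : ℕ) (i : ℕ) with hlt | hge
  · exact h231 ⟨p, i, j, by rw [Fin.lt_def]; exact hlt,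
      by rw [Fin.lt_def]; omega,
      by rw [Fin.lt_def]; omega,
      by rw [Fin.lt_def]; omega⟩
  · have hgt' : (j : ℕ) < (p : ℕ) := by omega
    exact h312 ⟨i, j, p, by rw [Fin.lt_def]; omega,
      by rw [Fin.lt_def]; exact hgt',
      by rw [Fin.lt_def]; omega,
      by rw [Fin.lt_def]; omega⟩

/-- at an ascent, everything before is below everything after -/
lemma factA (π : Equiv.Perm (Fin n)) (h312 : Avoids312 π) (h231 : Avoids231 π)
    (i i' : Fin n) (hii' : (i : ℕ) + 1 = (i' : ℕ)) (ha : π i < π i') :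
    ∀ j l : Fin n, (j : ℕ) ≤ (i : ℕ) → (i : ℕ) < (l : ℕ) → π j < π l := by
  have part1 : ∀ j : Fin n, (j : ℕ) ≤ (i : ℕ) → π j < π i' := by
    intro j hj
    rcases eq_or_lt_of_le hj with heq | hlt
    · have : j = i := Fin.ext heq
      rw [this]; exact ha
    · by_contra hc
      push_neg at hc
      have hne : π j ≠ π i' := by
        intro h
        have h2 := π.injective h
        rw [h2] at hlt
        omega
      have hgt : π i' < π j := lt_of_le_of_ne hc (Ne.symm hne)
      exact h312 ⟨j, i, i', by rw [Fin.lt_def]; exact hlt,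
        by rw [Fin.lt_def]; omega, ha, hgt⟩
  intro j l hj hl
  rcases Nat.lt_or_ge (i : ℕ) ((l : ℕ) - 1) with hlt | hge
  · by_contra hc
    push_neg at hc
    have hne : π l ≠ π j := by
      intro h
      have h2 := π.injective h
      rw [h2] at hl; omega
    have hgt : π l < π j := lt_of_le_of_ne hc hne
    exact h231 ⟨j, i', l, by rw [Fin.lt_def]; omega,
      by rw [Fin.lt_def]; omega, hgt, part1 j hj⟩
  · have : l = i' := Fin.ext (by omega)
    rw [this]; exact part1 j hj



/-- value of π at a natural number index -/
def pv (π : Equiv.Perm (Fin n)) (m : ℕ) : ℕ :=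
  if h : m < n then (π ⟨m, h⟩ : ℕ) else 0

lemma pv_coe (π : Equiv.Perm (Fin n)) (m : Fin n) : pv π (m : ℕ) = (π m : ℕ) := by
  simp [pv]

lemma pv_lt_n (π : Equiv.Perm (Fin n)) (m : ℕ) (hm : m < n) : pv π m < n := by
  simp only [pv, dif_pos hm]
  exact (π ⟨m, hm⟩).isLt

lemma pv_inj (π : Equiv.Perm (Fin n)) (m m' : ℕ) (hm : m < n) (hm' : m' < n)
    (h : pv π m = pv π m') : m = m' := by
  simp only [pv, dif_pos hm, dif_pos hm'] at h
  have := π.injective (Fin.ext h : π ⟨m, hm⟩ = π ⟨m', hm'⟩)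
  exact congrArg Fin.val this

lemma factD' (π : Equiv.Perm (Fin n)) (h312 : Avoids312 π) (h231 : Avoids231 π)
    (m : ℕ) (hm : m + 1 < n) (hd : pv π (m+1) < pv π m) :
    pv π (m+1) + 1 = pv π m := by
  have hm' : m < n := by omega
  simp only [pv, dif_pos hm, dif_pos hm'] at hd ⊢
  exact factD π h312 h231 ⟨m, hm'⟩ ⟨m+1, hm⟩ rfl (by rw [Fin.lt_def]; exact hd)

lemma factA' (π : Equiv.Perm (Fin n)) (h312 : Avoids312 π) (h231 : Avoids231 π)
    (m : ℕ) (hm : m + 1 < n) (ha : pv π m < pv π (m+1)) :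
    ∀ j l : ℕ, j ≤ m → m < l → l < n → pv π j < pv π l := by
  have hm' : m < n := by omega
  intro j l hj hl hln
  have hjn : j < n := by omega
  simp only [pv, dif_pos hm, dif_pos hm', dif_pos hjn, dif_pos hln] at ha ⊢
  have := factA π h312 h231 ⟨m, hm'⟩ ⟨m+1, hm⟩ rfl
    (by rw [Fin.lt_def]; exact ha) ⟨j, hjn⟩ ⟨l, hln⟩ hj hl
  rw [Fin.lt_def] at this
  exact this

/-- the Bool function recording ascents of π -/
def gOf (π : Equiv.Perm (Fin n)) : Fin (n-1) → Bool :=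
  fun t => decide (pv π t < pv π (t+1))

lemma prefix_lem (π : Equiv.Perm (Fin n)) (h312 : Avoids312 π) (h231 : Avoids231 π)
    (t : ℕ) (hbd : BdB n (gOf π) t = true) :
    ∀ j l : ℕ, j < t → t ≤ l → l < n → pv π j < pv π l := by
  intro j l hj hl hln
  cases t with
  | zero => omega
  | succ s =>
    have hsn : s + 1 < n := by omega
    rw [bd_succ n (gOf π) s hsn] at hbd
    simp only [gOf, decide_eq_true_eq] at hbd
    exact factA' π h312 h231 s hsn hbd j l (by omega) (by omega) hln

lemma surj_main (π : Equiv.Perm (Fin n)) (h312 : Avoids312 π) (h231 : Avoids231 π) :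
    Φ n (gOf π) = π := by
  apply Equiv.ext
  intro i
  apply Fin.ext
  rw [Φ_apply, ← pv_coe π i]
  set g := gOf π with hg
  have hin : (i : ℕ) < n := i.isLt
  have hai : aF n g i ≤ (i : ℕ) := a_le _
  have hbi : (i : ℕ) < bF n g i := b_gt _
  have hbn : bF n g i ≤ n := b_le _ hin
  set a := aF n g (i : ℕ) with hA
  set b := bF n g (i : ℕ) with hB
  -- lower bound on the layer
  have lower : ∀ m : ℕ, a ≤ m → m < n → a ≤ pv π m := by
    intro m hm hmn
    have hsub : (univ.filter (fun j : Fin n => (j : ℕ) < a)).image π ⊆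
        univ.filter (fun w : Fin n => (w : ℕ) < pv π m) := by
      intro w hw
      rw [Finset.mem_image] at hw
      obtain ⟨j, hj, rfl⟩ := hw
      rw [Finset.mem_filter] at hj ⊢
      refine ⟨Finset.mem_univ _, ?_⟩
      have := prefix_lem π h312 h231 a (by rw [hA, hg]; exact a_bd _) j m hj.2 hm hmn
      rw [pv_coe] at this
      exact this
    have hcard := Finset.card_le_card hsub
    rw [Finset.card_image_of_injective _ π.injective] at hcard
    rw [card_lt_coe a (by omega), card_lt_coe (pv π m) (le_of_lt (pv_lt_n π m hmn))] at hcard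
    exact hcard
  -- upper bound on the layer
  have upper : ∀ m : ℕ, m < b → m < n → pv π m < b := by
    intro m hm hmn
    rcases (b_spec (g := g) (i : ℕ)).2 with hb | hb
    · have hblt : b < n ∨ b = n := by omega
      rcases hblt with hblt | hbeq
      · have hsub : (univ.filter (fun j : Fin n => b ≤ (j : ℕ))).image π ⊆
            univ.filter (fun w : Fin n => pv π m + 1 ≤ (w : ℕ)) := by
          intro w hw
          rw [Finset.mem_image] at hw
          obtain ⟨l, hl, rfl⟩ := hw
          rw [Finset.mem_filter] at hl ⊢
          refine ⟨Finset.mem_univ _, ?_⟩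
          have := prefix_lem π h312 h231 b (by rw [hB, hg]; exact hb) m l hm hl.2 l.isLt
          rw [pv_coe] at this
          omega
        have hcard := Finset.card_le_card hsub
        rw [Finset.card_image_of_injective _ π.injective] at hcard
        rw [card_ge_coe b (by omega), card_ge_coe (pv π m + 1) (pv_lt_n π m hmn)] at hcard
        have := pv_lt_n π m hmn
        omega
      · rw [hbeq]; exact pv_lt_n π m hmn
    · have : b = n := by omega
      rw [this]; exact pv_lt_n π m hmn
  -- descent chain within the layer
  have chain : ∀ k : ℕ, a + k < b → pv π (a + k) + k = pv π a := by
    intro k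
    induction k with
    | zero => intro _; simp
    | succ k ih =>
      intro hk
      rw [show a + (k + 1) = a + k + 1 from rfl]
      have hk' : a + k < b := by omega
      have hkn : a + k + 1 < n := by omega
      have hnb : BdB n g (a + k + 1) = false :=
        no_bd_between (i := (i : ℕ)) (by omega) (by omega)
      rw [bd_succ n g (a + k) hkn] at hnb
      rw [hg] at hnb
      simp only [gOf, decide_eq_false_iff_not] at hnb
      push_neg at hnb
      have hne : pv π (a + k + 1) ≠ pv π (a + k) := by
        intro h
        have := pv_inj π _ _ (by omega) (by omega) h
        omega
      have hd : pv π (a + k + 1) < pv π (a + k) := lt_of_le_of_ne hnb hne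
      have hD := factD' π h312 h231 (a + k) hkn hd
      have := ih hk'
      omega
  -- conclude
  have hab1 : a ≤ b - 1 := by omega
  have e1 := chain ((i : ℕ) - a) (by omega)
  rw [show a + ((i : ℕ) - a) = (i : ℕ) by omega] at e1
  have e2 := chain (b - 1 - a) (by omega)
  rw [show a + (b - 1 - a) = b - 1 by omega] at e2
  have e3 := lower (b - 1) (by omega) (by omega)
  have e4 := upper a (by omega) (by omega)
  show vF n g (i : ℕ) = pv π (i : ℕ)
  have : aF n g (i : ℕ) + bF n g (i : ℕ) - 1 - (i : ℕ) = a + b - 1 - (i : ℕ) := by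
    rw [← hA, ← hB]
  unfold vF
  omega

end St10


open St10

theorem stmt10 (n : ℕ) (hn : 1 ≤ n) :
    Nat.card {π : Equiv.Perm (Fin n) // Avoids312 π ∧ Avoids231 π ∧ Avoids312 (π * π)} =
      2 ^ (n - 1) := by
  classical
  have hbij : Function.Bijective
      (fun g : Fin (n-1) → Bool =>
        (⟨Φ n g, Φ_av312, Φ_av231, by rw [Φ_sq]; exact av312_one⟩ :
          {π : Equiv.Perm (Fin n) // Avoids312 π ∧ Avoids231 π ∧ Avoids312 (π * π)})) := by
    constructor
    · intro g g' h
      have h2 : Φ n g = Φ n g' := congrArg Subtype.val h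
      funext t
      have ht : (t : ℕ) + 1 < n := by have := t.isLt; omega
      have hv : vF n g (t : ℕ) < vF n g ((t : ℕ) + 1) ↔
          vF n g' (t : ℕ) < vF n g' ((t : ℕ) + 1) := by
        have e1 : ∀ m : ℕ, (hm : m < n) → vF n g m = vF n g' m := by
          intro m hm
          have : Φ n g ⟨m, hm⟩ = Φ n g' ⟨m, hm⟩ := by rw [h2]
          have := congrArg Fin.val this
          rw [Φ_apply, Φ_apply] at this
          exact this
        rw [e1 _ (by omega), e1 _ ht]
      rw [Φ_ascent (g := g) (t : ℕ) ht, Φ_ascent (g := g') (t : ℕ) ht] at hv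
      simp only [Fin.eta] at hv
      cases hgt : g t <;> cases hgt' : g' t <;> simp_all
    · rintro ⟨π, hπ312, hπ231, _⟩
      exact ⟨gOf π, Subtype.ext (surj_main π hπ312 hπ231)⟩
  have hc := Nat.card_eq_of_bijective _ hbij
  rw [← hc]
  simp [Nat.card_eq_fintype_card]
end

section
/- For all n ≥ 1, the number of permutations π of [n] such that π avoids the pattern 231 and the pattern 1432, and π² avoids 231, equals L_{n+1} − ⌈n/2⌉ − 1, where L_m denotes the m-th Lucas number (L_1 = 1, L_2 = 3, L_{m} = L_{m−1} + L_{m−2}). -/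
open Equiv Finset

def Avoids1432 {n : ℕ} (π : Equiv.Perm (Fin n)) : Prop :=
  ¬ ∃ i j l m : Fin n, i < j ∧ j < l ∧ l < m ∧ π i < π m ∧ π m < π l ∧ π l < π j

def lucas : ℕ → ℕ
  | 0 => 2
  | 1 => 1
  | n + 2 => lucas (n + 1) + lucas n

instance {n : ℕ} (π : Equiv.Perm (Fin n)) : Decidable (Avoids231 π) := by
  unfold Avoids231; infer_instance

instance {n : ℕ} (π : Equiv.Perm (Fin n)) : Decidable (Avoids1432 π) := by
  unfold Avoids1432; infer_instance

def ClassP {n : ℕ} (π : Equiv.Perm (Fin n)) : Prop :=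
  Avoids231 π ∧ Avoids1432 π ∧ Avoids231 (π * π)

instance {n : ℕ} (π : Equiv.Perm (Fin n)) : Decidable (ClassP π) := by
  unfold ClassP; infer_instance

def countC (n : ℕ) : ℕ := (Finset.univ.filter (fun π : Equiv.Perm (Fin n) => ClassP π)).card

lemma countC_one : countC 1 = 1 := by decide
lemma countC_two : countC 2 = 2 := by decide

lemma natCard_eq_countC (n : ℕ) :
    Nat.card {π : Equiv.Perm (Fin n) // ClassP π} = countC n := by
  rw [Nat.card_eq_fintype_card, Fintype.card_subtype, countC]

/-- The permutation: positions `t < b` get value `m-1-t`; positions `t ≥ b` get `t - b`. -/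
def Jperm (b m : ℕ) : Equiv.Perm (Fin m) where
  toFun t := ⟨if t.val < b then m - 1 - t.val else t.val - b, by
    have := t.isLt; split <;> omega⟩
  invFun v := ⟨if v.val < m - b then b + v.val else m - 1 - v.val, by
    have := v.isLt; split <;> omega⟩
  left_inv t := by
    have := t.isLt
    apply Fin.ext
    simp only
    split_ifs <;> omega
  right_inv v := by
    have := v.isLt
    apply Fin.ext
    simp only
    split_ifs <;> omega

lemma Jperm_val (b m : ℕ) (t : Fin m) :
    ((Jperm b m) t).val = if t.val < b then m - 1 - t.val else t.val - b := rfl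


lemma Jperm_sq_val (b m : ℕ) (hb : m ≤ 2 * b) (t : Fin m) :
    ((Jperm b m * Jperm b m) t).val =
      if t.val < m - b then (m - b) - 1 - t.val
      else if t.val < b then t.val
      else m - 1 - (t.val - b) := by
  have ht := t.isLt
  rw [Equiv.Perm.mul_apply]
  rw [Jperm_val]
  rw [Jperm_val]
  split_ifs <;> omega

lemma Jperm_av231 (b m : ℕ) : Avoids231 (Jperm b m) := by
  rintro ⟨i, j, l, hij, hjl, h1, h2⟩
  simp only [Fin.lt_def, Jperm_val] at hij hjl h1 h2
  have hi := i.isLt; have hj := j.isLt; have hl := l.isLt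
  split_ifs at h1 h2 <;> omega

lemma Jperm_av1432 (b m : ℕ) : Avoids1432 (Jperm b m) := by
  rintro ⟨i, j, l, r, hij, hjl, hlr, h1, h2, h3⟩
  simp only [Fin.lt_def, Jperm_val] at hij hjl hlr h1 h2 h3
  have hi := i.isLt; have hj := j.isLt; have hl := l.isLt; have hr := r.isLt
  split_ifs at h1 h2 h3 <;> omega

lemma Jperm_sq_av231 (b m : ℕ) (hb : m ≤ 2 * b) : Avoids231 (Jperm b m * Jperm b m) := by
  rintro ⟨i, j, l, hij, hjl, h1, h2⟩
  simp only [Fin.lt_def, Jperm_sq_val b m hb] at hij hjl h1 h2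
  have hi := i.isLt; have hj := j.isLt; have hl := l.isLt
  split_ifs at h1 h2 <;> omega

lemma Jperm_class (b m : ℕ) (hb : m ≤ 2 * b) : ClassP (Jperm b m) :=
  ⟨Jperm_av231 b m, Jperm_av1432 b m, Jperm_sq_av231 b m hb⟩

def appendTop {m k : ℕ} (σ : Equiv.Perm (Fin m)) (ρ : Equiv.Perm (Fin k)) :
    Equiv.Perm (Fin (m + k)) :=
  finSumFinEquiv.permCongr (Equiv.sumCongr σ ρ)

lemma appendTop_castAdd {m k : ℕ} (σ : Equiv.Perm (Fin m)) (ρ : Equiv.Perm (Fin k)) (x : Fin m) :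
    appendTop σ ρ (Fin.castAdd k x) = Fin.castAdd k (σ x) := by
  simp [appendTop, Equiv.permCongr_apply]

lemma appendTop_natAdd {m k : ℕ} (σ : Equiv.Perm (Fin m)) (ρ : Equiv.Perm (Fin k)) (y : Fin k) :
    appendTop σ ρ (Fin.natAdd m y) = Fin.natAdd m (ρ y) := by
  simp [appendTop, Equiv.permCongr_apply]

lemma fin_add_cases {m k : ℕ} (x : Fin (m + k)) :
    (∃ a : Fin m, x = Fin.castAdd k a) ∨ (∃ c : Fin k, x = Fin.natAdd m c) :=
  Fin.addCases (fun a => Or.inl ⟨a, rfl⟩) (fun c => Or.inr ⟨c, rfl⟩) x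

lemma appendTop_mul {m k : ℕ} (σ₁ σ₂ : Equiv.Perm (Fin m)) (ρ₁ ρ₂ : Equiv.Perm (Fin k)) :
    appendTop σ₁ ρ₁ * appendTop σ₂ ρ₂ = appendTop (σ₁ * σ₂) (ρ₁ * ρ₂) := by
  apply Equiv.ext
  intro x
  rcases fin_add_cases x with ⟨a, rfl⟩ | ⟨c, rfl⟩ <;>
    simp [Equiv.Perm.mul_apply, appendTop_castAdd, appendTop_natAdd]

lemma av231_appendTop {m k : ℕ} (σ : Equiv.Perm (Fin m)) (ρ : Equiv.Perm (Fin k)) (hk : k ≤ 2) :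
    Avoids231 (appendTop σ ρ) ↔ Avoids231 σ := by
  constructor
  · intro h
    rintro ⟨i, j, l, hij, hjl, h1, h2⟩
    exact h ⟨Fin.castAdd k i, Fin.castAdd k j, Fin.castAdd k l, by
      rw [Fin.lt_def]; simpa using Fin.lt_def.mp hij, by rw [Fin.lt_def]; simpa using Fin.lt_def.mp hjl, by
      simp only [appendTop_castAdd]; rw [Fin.lt_def]; simpa using Fin.lt_def.mp h1, by
      simp only [appendTop_castAdd]; rw [Fin.lt_def]; simpa using Fin.lt_def.mp h2⟩
  · intro h
    rintro ⟨i, j, l, hij, hjl, h1, h2⟩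
    rcases fin_add_cases i with ⟨a, rfl⟩ | ⟨a, rfl⟩ <;>
      rcases fin_add_cases j with ⟨b, rfl⟩ | ⟨b, rfl⟩ <;>
        rcases fin_add_cases l with ⟨c, rfl⟩ | ⟨c, rfl⟩ <;>
          simp only [appendTop_castAdd, appendTop_natAdd, Fin.lt_def, Fin.coe_castAdd,
            Fin.coe_natAdd] at hij hjl h1 h2
    · exact h ⟨a, b, c, Fin.lt_def.mpr hij, Fin.lt_def.mpr hjl,
        Fin.lt_def.mpr h1, Fin.lt_def.mpr h2⟩
    all_goals (
      have h2' := a.isLt; have h3' := b.isLt; have h4' := c.isLt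
      first
      | omega
      | (have := (σ a).isLt; omega)
      | (have := (σ b).isLt; omega)
      | (have := (σ a).isLt; have := (σ b).isLt; omega))

lemma av1432_appendTop {m k : ℕ} (σ : Equiv.Perm (Fin m)) (ρ : Equiv.Perm (Fin k)) (hk : k ≤ 2) :
    Avoids1432 (appendTop σ ρ) ↔ Avoids1432 σ := by
  constructor
  · intro h
    rintro ⟨i, j, l, r, hij, hjl, hlr, h1, h2, h3⟩
    exact h ⟨Fin.castAdd k i, Fin.castAdd k j, Fin.castAdd k l, Fin.castAdd k r, by
      rw [Fin.lt_def]; simpa using Fin.lt_def.mp hij, by rw [Fin.lt_def]; simpa using Fin.lt_def.mp hjl, by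
      rw [Fin.lt_def]; simpa using Fin.lt_def.mp hlr, by
      simp only [appendTop_castAdd]; rw [Fin.lt_def]; simpa using Fin.lt_def.mp h1, by
      simp only [appendTop_castAdd]; rw [Fin.lt_def]; simpa using Fin.lt_def.mp h2, by
      simp only [appendTop_castAdd]; rw [Fin.lt_def]; simpa using Fin.lt_def.mp h3⟩
  · intro h
    rintro ⟨i, j, l, r, hij, hjl, hlr, h1, h2, h3⟩
    rcases fin_add_cases i with ⟨a, rfl⟩ | ⟨a, rfl⟩ <;>
      rcases fin_add_cases j with ⟨b, rfl⟩ | ⟨b, rfl⟩ <;>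
        rcases fin_add_cases l with ⟨c, rfl⟩ | ⟨c, rfl⟩ <;>
          rcases fin_add_cases r with ⟨d, rfl⟩ | ⟨d, rfl⟩ <;>
            simp only [appendTop_castAdd, appendTop_natAdd, Fin.lt_def, Fin.coe_castAdd,
              Fin.coe_natAdd] at hij hjl hlr h1 h2 h3
    · exact h ⟨a, b, c, d, Fin.lt_def.mpr hij, Fin.lt_def.mpr hjl, Fin.lt_def.mpr hlr,
        Fin.lt_def.mpr h1, Fin.lt_def.mpr h2, Fin.lt_def.mpr h3⟩
    all_goals (
      have h2' := a.isLt; have h3' := b.isLt; have h4' := c.isLt; have h5' := d.isLt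
      first
      | omega
      | (have := (σ a).isLt; omega)
      | (have := (σ b).isLt; omega)
      | (have := (σ c).isLt; omega)
      | (have := (σ a).isLt; have := (σ b).isLt; have := (σ c).isLt; omega))

lemma classP_appendTop {m k : ℕ} (σ : Equiv.Perm (Fin m)) (ρ : Equiv.Perm (Fin k)) (hk : k ≤ 2) :
    ClassP (appendTop σ ρ) ↔ ClassP σ := by
  unfold ClassP
  rw [appendTop_mul, av231_appendTop σ ρ hk, av1432_appendTop σ ρ hk,
    av231_appendTop (σ * σ) (ρ * ρ) hk]

lemma exists_appendTop {m k : ℕ} (π : Equiv.Perm (Fin (m + k))) (ρ : Equiv.Perm (Fin k))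
    (h : ∀ y : Fin k, π (Fin.natAdd m y) = Fin.natAdd m (ρ y)) :
    ∃ σ : Equiv.Perm (Fin m), π = appendTop σ ρ := by
  have hlow : ∀ x : Fin m, (π (Fin.castAdd k x)).val < m := by
    intro x
    by_contra hc
    push_neg at hc
    set v := π (Fin.castAdd k x) with hv
    have hvlt := v.isLt
    have hy : v = Fin.natAdd m ⟨v.val - m, by omega⟩ := by
      apply Fin.ext; simp [Fin.coe_natAdd]; omega
    have hthis := h (ρ.symm ⟨v.val - m, by omega⟩)
    rw [Equiv.apply_symm_apply] at hthis
    have heq : π (Fin.natAdd m (ρ.symm ⟨v.val - m, by omega⟩)) = π (Fin.castAdd k x) :=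
      hthis.trans (hy.symm.trans hv)
    have := π.injective heq
    have hval := congrArg Fin.val this
    simp [Fin.coe_natAdd, Fin.coe_castAdd] at hval
    have := x.isLt
    omega
  have hlow' : ∀ x : Fin m, (π.symm (Fin.castAdd k x)).val < m := by
    intro x
    by_contra hc
    push_neg at hc
    set v := π.symm (Fin.castAdd k x) with hv
    have hvlt := v.isLt
    have hy : v = Fin.natAdd m ⟨v.val - m, by omega⟩ := by
      apply Fin.ext; simp [Fin.coe_natAdd]; omega
    have : π v = Fin.castAdd k x := by rw [hv, Equiv.apply_symm_apply]
    rw [hy] at this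
    rw [h] at this
    have hval := congrArg Fin.val this
    simp [Fin.coe_natAdd, Fin.coe_castAdd] at hval
    have := x.isLt
    have := (ρ ⟨v.val - m, by omega⟩).isLt
    omega
  refine ⟨⟨fun x => ⟨(π (Fin.castAdd k x)).val, hlow x⟩,
    fun x => ⟨(π.symm (Fin.castAdd k x)).val, hlow' x⟩, ?_, ?_⟩, ?_⟩
  · intro x
    apply Fin.ext
    simp only
    have hcast : Fin.castAdd k (⟨(π (Fin.castAdd k x)).val, hlow x⟩ : Fin m)
        = π (Fin.castAdd k x) := Fin.ext rfl
    rw [hcast, Equiv.symm_apply_apply]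
    rfl
  · intro x
    apply Fin.ext
    simp only
    have hcast : Fin.castAdd k (⟨(π.symm (Fin.castAdd k x)).val, hlow' x⟩ : Fin m)
        = π.symm (Fin.castAdd k x) := Fin.ext rfl
    rw [hcast, Equiv.apply_symm_apply]
    rfl
  · apply Equiv.ext
    intro x
    rcases fin_add_cases x with ⟨a, rfl⟩ | ⟨c, rfl⟩
    · rw [appendTop_castAdd]
      apply Fin.ext
      simp only [Fin.coe_castAdd]
      rfl
    · rw [appendTop_natAdd, h]

----------------------------------------------------------------
-- ℕ-valued shadow of a permutation
----------------------------------------------------------------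

def pv {m : ℕ} (π : Equiv.Perm (Fin m)) (t : ℕ) : ℕ :=
  if h : t < m then (π ⟨t, h⟩).val else t

lemma pv_lt {m : ℕ} (π : Equiv.Perm (Fin m)) {t : ℕ} (h : t < m) : pv π t < m := by
  rw [pv, dif_pos h]; exact (π ⟨t, h⟩).isLt

lemma pv_eq {m : ℕ} (π : Equiv.Perm (Fin m)) {t : ℕ} (h : t < m) :
    pv π t = (π ⟨t, h⟩).val := by rw [pv, dif_pos h]

lemma pv_apply {m : ℕ} (π : Equiv.Perm (Fin m)) (x : Fin m) :
    pv π x.val = (π x).val := by rw [pv, dif_pos x.isLt]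

lemma pinj_s12 {m : ℕ} (π : Equiv.Perm (Fin m)) {a b : ℕ} (ha : a < m) (hb : b < m)
    (h : pv π a = pv π b) : a = b := by
  rw [pv_eq π ha, pv_eq π hb] at h
  have := π.injective (Fin.ext h)
  exact congrArg Fin.val this

lemma psurj {m : ℕ} (π : Equiv.Perm (Fin m)) {v : ℕ} (hv : v < m) :
    ∃ t, t < m ∧ pv π t = v := by
  refine ⟨(π.symm ⟨v, hv⟩).val, (π.symm ⟨v, hv⟩).isLt, ?_⟩
  rw [pv_eq π (π.symm ⟨v, hv⟩).isLt]
  have : (⟨(π.symm ⟨v, hv⟩).val, (π.symm ⟨v, hv⟩).isLt⟩ : Fin m) = π.symm ⟨v, hv⟩ :=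
    Fin.ext rfl
  simp [this]

lemma pv_mul {m : ℕ} (π : Equiv.Perm (Fin m)) {t : ℕ} (h : t < m) :
    pv (π * π) t = pv π (pv π t) := by
  rw [pv_eq (π * π) h, Equiv.Perm.mul_apply, pv_eq π h, pv_eq π (π ⟨t, h⟩).isLt]

lemma nA1 {m : ℕ} {π : Equiv.Perm (Fin m)} (hA : Avoids231 π) :
    ∀ i j l : ℕ, i < j → j < l → l < m → pv π l < pv π i → pv π i < pv π j → False := by
  intro i j l hij hjl hlm h1 h2
  have him : i < m := by omega
  have hjm : j < m := by omega
  rw [pv_eq π hlm, pv_eq π him] at h1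
  rw [pv_eq π him, pv_eq π hjm] at h2
  exact hA ⟨⟨i, him⟩, ⟨j, hjm⟩, ⟨l, hlm⟩, by simpa using hij, by simpa using hjl,
    Fin.lt_def.mpr h1, Fin.lt_def.mpr h2⟩

lemma nA2 {m : ℕ} {π : Equiv.Perm (Fin m)} (hA : Avoids1432 π) :
    ∀ i j l r : ℕ, i < j → j < l → l < r → r < m →
      pv π i < pv π r → pv π r < pv π l → pv π l < pv π j → False := by
  intro i j l r hij hjl hlr hrm h1 h2 h3
  have him : i < m := by omega
  have hjm : j < m := by omega
  have hlm : l < m := by omega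
  rw [pv_eq π him, pv_eq π hrm] at h1
  rw [pv_eq π hrm, pv_eq π hlm] at h2
  rw [pv_eq π hlm, pv_eq π hjm] at h3
  exact hA ⟨⟨i, him⟩, ⟨j, hjm⟩, ⟨l, hlm⟩, ⟨r, hrm⟩, by simpa using hij, by simpa using hjl,
    by simpa using hlr, Fin.lt_def.mpr h1, Fin.lt_def.mpr h2, Fin.lt_def.mpr h3⟩

lemma nA3 {m : ℕ} {π : Equiv.Perm (Fin m)} (hA : Avoids231 (π * π)) :
    ∀ i j l : ℕ, i < j → j < l → l < m →
      pv π (pv π l) < pv π (pv π i) → pv π (pv π i) < pv π (pv π j) → False := by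
  intro i j l hij hjl hlm h1 h2
  have him : i < m := by omega
  have hjm : j < m := by omega
  rw [← pv_mul π hlm, ← pv_mul π him] at h1
  rw [← pv_mul π him, ← pv_mul π hjm] at h2
  exact nA1 hA i j l hij hjl hlm h1 h2

----------------------------------------------------------------
-- counting helpers
----------------------------------------------------------------

lemma card_le_of_lt {m : ℕ} (f : ℕ → ℕ)
    (finj : ∀ a b, a < m → b < m → f a = f b → a = b)
    (S : Finset ℕ) (v : ℕ) (h : ∀ x ∈ S, x < m ∧ f x < v) : S.card ≤ v := by
  have h1 : (S.image f).card = S.card :=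
    Finset.card_image_of_injOn (fun a ha b hb hab => finj a b (h a ha).1 (h b hb).1 hab)
  have h2 : S.image f ⊆ Finset.range v := by
    intro y hy
    obtain ⟨x, hx, rfl⟩ := Finset.mem_image.mp hy
    exact Finset.mem_range.mpr (h x hx).2
  calc S.card = (S.image f).card := h1.symm
    _ ≤ (Finset.range v).card := Finset.card_le_card h2
    _ = v := Finset.card_range v

lemma card_le_of_gt {m : ℕ} (f : ℕ → ℕ)
    (finj : ∀ a b, a < m → b < m → f a = f b → a = b)
    (S : Finset ℕ) (v M : ℕ) (h : ∀ x ∈ S, x < m ∧ v < f x ∧ f x < M) :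
    S.card ≤ M - 1 - v := by
  have h1 : (S.image f).card = S.card :=
    Finset.card_image_of_injOn (fun a ha b hb hab => finj a b (h a ha).1 (h b hb).1 hab)
  have h2 : S.image f ⊆ Finset.Ioo v M := by
    intro y hy
    obtain ⟨x, hx, rfl⟩ := Finset.mem_image.mp hy
    exact Finset.mem_Ioo.mpr ⟨(h x hx).2.1, (h x hx).2.2⟩
  have h3 := Finset.card_le_card h2
  rw [Nat.card_Ioo] at h3
  omega

lemma card_le_of_range {m : ℕ} (f : ℕ → ℕ)
    (finj : ∀ a b, a < m → b < m → f a = f b → a = b)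
    (S : Finset ℕ) (lo hi : ℕ) (h : ∀ x ∈ S, x < m ∧ lo ≤ f x ∧ f x ≤ hi) :
    S.card ≤ hi + 1 - lo := by
  have h1 : (S.image f).card = S.card :=
    Finset.card_image_of_injOn (fun a ha b hb hab => finj a b (h a ha).1 (h b hb).1 hab)
  have h2 : S.image f ⊆ Finset.Icc lo hi := by
    intro y hy
    obtain ⟨x, hx, rfl⟩ := Finset.mem_image.mp hy
    exact Finset.mem_Icc.mpr ⟨(h x hx).2.1, (h x hx).2.2⟩
  have h3 := Finset.card_le_card h2
  rw [Nat.card_Icc] at h3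
  omega

lemma chain_dec (f : ℕ → ℕ) (B : ℕ) (hf : ∀ a b, a < b → b ≤ B → f b < f a) :
    ∀ t d, t + d ≤ B → f (t + d) + d ≤ f t := by
  intro t d
  induction d with
  | zero => simp
  | succ d ih =>
    intro hB
    have h1 := hf (t + d) (t + d + 1) (by omega) (by omega)
    have h2 := ih (by omega)
    have he : t + (d + 1) = t + d + 1 := by omega
    rw [he]
    omega

lemma chain_inc (f : ℕ → ℕ) (A B : ℕ) (hf : ∀ a b, A ≤ a → a < b → b ≤ B → f a < f b) :
    ∀ t d, A ≤ t → t + d ≤ B → f t + d ≤ f (t + d) := by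
  intro t d hA
  induction d with
  | zero => simp
  | succ d ih =>
    intro hB
    have h1 := hf (t + d) (t + d + 1) (by omega) (by omega) (by omega)
    have h2 := ih (by omega)
    have he : t + (d + 1) = t + d + 1 := by omega
    rw [he]
    omega

----------------------------------------------------------------
-- classification
----------------------------------------------------------------

theorem classify_s12 {m : ℕ} (π : Equiv.Perm (Fin m)) (hm : 3 ≤ m) (hP : ClassP π)
    (hc1 : pv π (m-1) ≠ m-1) (hc2 : ¬(pv π (m-2) = m-1 ∧ pv π (m-1) = m-2)) :
    ∃ b, (m ≤ 2*b ∧ b ≤ m-2 ∨ b = m) ∧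
      ∀ t, t < m → pv π t = if t < b then m - 1 - t else t - b := by
  obtain ⟨hA1, hA2, hA3⟩ := hP
  have finj := fun a b ha hb h => pinj_s12 π (a := a) (b := b) ha hb h
  -- position of the maximum value m-1
  obtain ⟨k, hkm, hpk⟩ := psurj π (v := m-1) (by omega)
  -- Step 1 : k = 0
  have s1a : ∀ i l, i < k → k < l → l < m → pv π i < pv π l := by
    intro i l hik hkl hlm
    by_contra hno
    push_neg at hno
    have hne : pv π l ≠ pv π i := fun h => by have := finj l i hlm (by omega) h; omega
    have hlt : pv π l < pv π i := by omega
    have hik' : pv π i < pv π k := by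
      have h1 : pv π i ≠ m - 1 := fun h => by
        have := finj i k (by omega) hkm (h.trans hpk.symm); omega
      have := pv_lt π (t := i) (by omega)
      omega
    exact nA1 hA1 i k l hik hkl hlm hlt (by rw [hpk] at hik' ⊢; exact hik')
  have s1b : 1 ≤ k → ∀ l r, k < l → l < r → r < m → pv π l < pv π r := by
    intro hk1 l r hkl hlr hrm
    by_contra hno
    push_neg at hno
    have hne : pv π r ≠ pv π l := fun h => by have := finj r l hrm (by omega) h; omega
    have h1 : pv π 0 < pv π r := s1a 0 r (by omega) (by omega) hrm
    have h2 : pv π r < pv π l := by omega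
    have h3 : pv π l < pv π k := by
      have hx : pv π l ≠ m - 1 := fun h => by
        have := finj l k (by omega) hkm (h.trans hpk.symm); omega
      have := pv_lt π (t := l) (by omega)
      rw [hpk]; omega
    exact nA2 hA2 0 k l r (by omega) hkl hlr hrm h1 h2 h3
  have s1c : 1 ≤ k → ∀ l, k < l → l < m → pv π l = l - 1 := by
    intro hk1 l hkl hlm
    have hlow : l - 1 ≤ pv π l := by
      have h := card_le_of_lt (m := m) (pv π) finj ((Finset.range l).erase k) (pv π l) ?_
      · have hcard : ((Finset.range l).erase k).card = l - 1 := by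
          rw [Finset.card_erase_of_mem (Finset.mem_range.mpr hkl), Finset.card_range]
        omega
      · intro x hx
        rw [Finset.mem_erase, Finset.mem_range] at hx
        refine ⟨by omega, ?_⟩
        rcases lt_trichotomy x k with h | h | h
        · exact s1a x l h hkl hlm
        · exact absurd h hx.1
        · exact s1b hk1 x l h hx.2 hlm
    have hup : pv π l ≤ l - 1 := by
      have h := card_le_of_gt (m := m) (pv π) finj (insert k (Finset.Ioo l m)) (pv π l) m ?_
      · have hcard2 : (insert k (Finset.Ioo l m)).card = m - l := by
          rw [Finset.card_insert_of_notMem (by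
            intro hc; rw [Finset.mem_Ioo] at hc; omega), Nat.card_Ioo]
          omega
        rw [hcard2] at h
        have := pv_lt π (t := l) (by omega)
        omega
      · intro x hx
        rcases Finset.mem_insert.mp hx with rfl | hx'
        · refine ⟨hkm, ?_, by rw [hpk]; omega⟩
          rw [hpk]
          have hne : pv π l ≠ m - 1 := fun h => by
            have := finj l x (by omega) hkm (h.trans hpk.symm); omega
          have := pv_lt π (t := l) (by omega)
          omega
        · rw [Finset.mem_Ioo] at hx'
          exact ⟨by omega, s1b hk1 l x hkl hx'.1 hx'.2, pv_lt π (by omega)⟩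
    omega
  have hk0 : k = 0 := by
    have hcases : k = 0 ∨ (1 ≤ k ∧ k ≤ m - 3) ∨ k = m - 2 ∨ k = m - 1 := by omega
    rcases hcases with h | ⟨h1, h2⟩ | h | h
    · exact h
    · exfalso
      have e1 : pv π (m - 1) = m - 2 := s1c h1 (m-1) (by omega) (by omega)
      have e2 : pv π (k + 1) = k := by
        have := s1c h1 (k+1) (by omega) (by omega); omega
      have e3 : pv π (k + 2) = k + 1 := by
        have := s1c h1 (k+2) (by omega) (by omega); omega
      apply nA3 hA3 k (k+1) (k+2) (by omega) (by omega) (by omega)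
      · rw [e3, e2, hpk, e1]
        omega
      · rw [hpk, e1, e2, hpk]
        omega
    · exfalso
      rw [h] at hpk
      exact hc2 ⟨hpk, s1c (by omega) (m-1) (by omega) (by omega)⟩
    · exfalso
      rw [h] at hpk
      exact hc1 hpk
  subst hk0
  have hp0 : pv π 0 = m - 1 := hpk
  -- Step 2
  obtain ⟨z, hzm, hpz⟩ := psurj π (v := 0) (by omega)
  have hz1 : 1 ≤ z := by
    rcases Nat.eq_zero_or_pos z with rfl | h
    · omega
    · exact h
  have s2a : ∀ a b, a < b → b ≤ z → pv π b < pv π a := by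
    intro a b hab hbz
    have ha0 : pv π a ≠ 0 := fun h => by
      have := finj a z (by omega) hzm (h.trans hpz.symm); omega
    rcases eq_or_lt_of_le hbz with rfl | hbz'
    · rw [hpz]; omega
    · by_contra hno
      push_neg at hno
      have hne : pv π a ≠ pv π b := fun h => by have := finj a b (by omega) (by omega) h; omega
      have h2 : pv π a < pv π b := by omega
      exact nA1 hA1 a b z hab hbz' hzm (by rw [hpz]; omega) h2
  rcases (by omega : z = m - 1 ∨ z ≤ m - 2) with hzeq | hz2
  · -- π is the full reversal
    refine ⟨m, Or.inr rfl, ?_⟩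
    intro t htm
    rw [if_pos htm]
    have hup : pv π t ≤ m - 1 - t := by
      have h := card_le_of_gt (m := m) (pv π) finj (Finset.range t) (pv π t) m ?_
      · rw [Finset.card_range] at h
        have := pv_lt π (t := t) (by omega)
        omega
      · intro x hx
        rw [Finset.mem_range] at hx
        exact ⟨by omega, s2a x t hx (by omega), pv_lt π (by omega)⟩
    have hlow : m - 1 - t ≤ pv π t := by
      have h := card_le_of_lt (m := m) (pv π) finj (Finset.Ioo t m) (pv π t) ?_
      · rw [Nat.card_Ioo] at h; omega
      · intro x hx
        rw [Finset.mem_Ioo] at hx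
        exact ⟨by omega, s2a t x hx.1 (by omega)⟩
    omega
  · -- main case: suffix nonempty
    have qinj : ∀ a b, a < m → b < m → pv π (pv π a) = pv π (pv π b) → a = b := by
      intro a b ha hb h
      exact finj a b ha hb (finj _ _ (pv_lt π ha) (pv_lt π hb) h)
    have hqz : pv π (pv π z) = m - 1 := by rw [hpz, hp0]
    have Hlem : ∀ a c, a < z → z < c → c < m → pv π (pv π a) < pv π (pv π c) := by
      intro a c haz hzc hcm
      have hqa : pv π (pv π a) ≠ m - 1 := fun h => by
        have := qinj a z (by omega) hzm (h.trans hqz.symm); omega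
      have hqa2 : pv π (pv π a) < m := pv_lt π (pv_lt π (by omega))
      by_contra hno
      push_neg at hno
      have hne : pv π (pv π c) ≠ pv π (pv π a) := fun h => by
        have := qinj c a hcm (by omega) h; omega
      exact nA3 hA3 a z c haz hzc hcm (by omega) (by rw [hqz]; omega)
    obtain ⟨w, hwm, hpw⟩ := psurj π (v := z) (by omega)
    have hwz : w < z := by
      have hwne : w ≠ z := fun h => by rw [h, hpz] at hpw; omega
      rcases lt_or_gt_of_ne hwne with h | h
      · exact h
      · exfalso
        have h1 := Hlem 0 w (by omega) h hwm
        rw [hpw, hpz] at h1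
        omega
    have H1 : ∀ a, a < z → pv π (pv π a) < z := by
      intro a haz
      have h := card_le_of_gt (m := m) (fun t => pv π (pv π t)) qinj (Finset.Ico z m)
        (pv π (pv π a)) m ?_
      · rw [Nat.card_Ico] at h
        omega
      · intro x hx
        rw [Finset.mem_Ico] at hx
        show x < m ∧ pv π (pv π a) < pv π (pv π x) ∧ pv π (pv π x) < m
        refine ⟨hx.2, ?_, pv_lt π (pv_lt π hx.2)⟩
        rcases eq_or_lt_of_le hx.1 with heq | h2
        · rw [← heq, hqz]
          have : pv π (pv π a) ≠ m - 1 := fun h => by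
            have := qinj a z (by omega) hzm (h.trans hqz.symm); omega
          have := pv_lt π (pv_lt π (t := a) (by omega))
          omega
        · exact Hlem a x haz h2 hx.2
    have H2 : ∀ c, z < c → c < m → z ≤ pv π (pv π c) := by
      intro c hzc hcm
      have h := card_le_of_lt (m := m) (fun t => pv π (pv π t)) qinj (Finset.range z)
        (pv π (pv π c)) ?_
      · rw [Finset.card_range] at h; omega
      · intro x hx
        rw [Finset.mem_range] at hx
        show x < m ∧ pv π (pv π x) < pv π (pv π c)
        exact ⟨by omega, Hlem x c hx hzc hcm⟩
    have hw1 : 1 ≤ w := by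
      rcases Nat.eq_zero_or_pos w with rfl | h
      · rw [hp0] at hpw; omega
      · exact h
    -- C1 : the part of the prefix after w is the interval [w+1, z] reversed
    have C1 : ∀ t, w ≤ t → t < z → pv π t = z + w - t := by
      intro t hwt
      induction t, hwt using Nat.le_induction with
      | base => intro _; rw [hpw]; omega
      | succ t ht ih =>
        intro htz
        have hpt : pv π t = z + w - t := ih (by omega)
        have hdec : pv π (t+1) < pv π t := s2a t (t+1) (by omega) (by omega)
        by_contra hne
        have hlt : pv π (t+1) < z + w - t - 1 := by omega
        have hv'm : z + w - t - 1 < m := by omega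
        obtain ⟨q₀, hq₀m, hq₀⟩ := psurj π hv'm
        have hq₀z : q₀ ≠ z := fun h => by rw [h, hpz] at hq₀; omega
        rcases lt_or_gt_of_ne hq₀z with h | h
        · -- q₀ in the prefix: impossible
          rcases (by omega : q₀ < t ∨ q₀ = t ∨ q₀ = t + 1 ∨ t + 1 < q₀) with h2 | h2 | h2 | h2
          · have := s2a q₀ t h2 (by omega); omega
          · rw [h2, hpt] at hq₀; omega
          · rw [h2] at hq₀; omega
          · have := s2a (t+1) q₀ h2 (by omega); omega
        · -- q₀ in the suffix: contradiction with H2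
          have h2 := H2 q₀ h hq₀m
          rw [hq₀] at h2
          have h3 : pv π (z + w - t - 1) < pv π w := s2a w (z + w - t - 1) (by omega) (by omega)
          rw [hpw] at h3
          omega
    -- small values 1..w all lie in the suffix
    have hsmallpos : ∀ v, 1 ≤ v → v ≤ w → ∃ qv, z < qv ∧ qv < m ∧ pv π qv = v := by
      intro v hv1 hvw
      obtain ⟨qv, hqvm, hqv⟩ := psurj π (v := v) (by omega)
      refine ⟨qv, ?_, hqvm, hqv⟩
      have hqvz : qv ≠ z := fun h => by rw [h, hpz] at hqv; omega
      by_contra hno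
      push_neg at hno
      have hqvz' : qv < z := by omega
      rcases (by omega : qv < w ∨ qv = w ∨ (w ≤ qv ∧ qv < z)) with h | h | h
      · have := s2a qv w h (by omega); rw [hpw] at this; omega
      · rw [h, hpw] at hqv; omega
      · have := C1 qv h.1 h.2; omega
    -- C3 : all suffix values are ≤ w
    have C3 : ∀ x, z < x → x < m → pv π x ≤ w := by
      by_contra hno
      push_neg at hno
      obtain ⟨x, hzx, hxm, hwx⟩ := hno
      set T := (Finset.Ioo z m).filter (fun y => z < pv π y) with hT
      have hmemT : ∀ y, y ∈ T ↔ (z < y ∧ y < m ∧ z < pv π y) := by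
        intro y
        rw [hT, Finset.mem_filter, Finset.mem_Ioo]
        tauto
      have hxT : x ∈ T := by
        rw [hmemT]
        refine ⟨hzx, hxm, ?_⟩
        -- p x > w and p x ∉ [w+1, z] since those values sit in the prefix
        by_contra hc
        push_neg at hc
        have hxz' : pv π x ≠ z := fun h => by
          have := finj x w hxm hwm (h.trans hpw.symm); omega
        have hrange : w + 1 ≤ pv π x ∧ pv π x ≤ z - 1 := by omega
        have := C1 (z + w - pv π x) (by omega) (by omega)
        have heq : pv π (z + w - pv π x) = pv π x := by rw [this]; omega
        have := finj _ _ (by omega) hxm heq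
        omega
      have hup : ∀ y ∈ T, ∀ y', y < y' → y' < m → y' ∈ T := by
        intro y hy y' hyy' hy'm
        rw [hmemT] at hy ⊢
        refine ⟨by omega, hy'm, ?_⟩
        have h1 : ¬(pv π y' < pv π w ∧ pv π w < pv π y) := by
          intro hc
          exact nA1 hA1 w y y' (by omega) hyy' hy'm (by omega) (by omega)
        rw [hpw] at h1
        have h2 : pv π y' ≠ z := fun h => by
          have := finj y' w hy'm hwm (h.trans hpw.symm); omega
        omega
      have hcloT : ∀ y ∈ T, pv π y ∈ T := by
        intro y hy
        rw [hmemT] at hy ⊢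
        refine ⟨hy.2.2, pv_lt π hy.2.1, ?_⟩
        have h1 := H2 y hy.1 hy.2.1
        have h2 : pv π (pv π y) ≠ z := fun h => by
          have := finj (pv π y) w (pv_lt π hy.2.1) hwm (h.trans hpw.symm)
          omega
        omega
      have hlastT : m - 1 ∈ T := by
        rcases (by omega : x = m - 1 ∨ x < m - 1) with h | h
        · rw [← h]; exact hxT
        · exact hup x hxT (m-1) h (by omega)
      have himage : T.image (pv π) ⊆ T.erase (m - 1) := by
        intro y hy
        obtain ⟨y', hy', rfl⟩ := Finset.mem_image.mp hy
        rw [Finset.mem_erase]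
        refine ⟨?_, hcloT y' hy'⟩
        intro hc
        rw [hmemT] at hy'
        have := finj y' 0 (by omega) (by omega) (hc.trans hp0.symm)
        omega
      have hcards : T.card ≤ T.card - 1 := by
        have h1 : (T.image (pv π)).card = T.card := by
          apply Finset.card_image_of_injOn
          intro a ha b hb hab
          simp only [Finset.mem_coe] at ha hb
          rw [hmemT] at ha hb
          exact finj a b (by omega) (by omega) hab
        have h2 := Finset.card_le_card himage
        rw [Finset.card_erase_of_mem hlastT] at h2
        omega
      have hpos : 0 < T.card := Finset.card_pos.mpr ⟨x, hxT⟩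
      omega
    -- sizes match up
    have hsw : m - 1 = z + w := by
      have hle : w ≤ m - 1 - z := by
        have h := card_le_of_gt (m := m) (pv π) finj (Finset.range w) z m ?_
        · rw [Finset.card_range] at h; omega
        · intro t ht
          rw [Finset.mem_range] at ht
          have := s2a t w ht (by omega)
          rw [hpw] at this
          exact ⟨by omega, by omega, pv_lt π (by omega)⟩
      have hge : m - z - 1 ≤ w := by
        have h := card_le_of_range (m := m) (pv π) finj (Finset.Ioo z m) 1 w ?_
        · rw [Nat.card_Ioo] at h; omega
        · intro t ht
          rw [Finset.mem_Ioo] at ht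
          have h0 : pv π t ≠ 0 := fun h => by
            have := finj t z (by omega) hzm (h.trans hpz.symm); omega
          exact ⟨by omega, by omega, C3 t ht.1 ht.2⟩
      omega
    -- C2 : the first w entries are m-1, m-2, ...
    have C2 : ∀ t, t < w → pv π t = m - 1 - t := by
      intro t htw
      have hup : pv π t + t ≤ m - 1 := by
        have := chain_dec (pv π) z s2a 0 t (by omega)
        simpa [hp0] using this
      have hlow : pv π (w - 1) + (w - 1 - t) ≤ pv π t := by
        have := chain_dec (pv π) z s2a t (w - 1 - t) (by omega)
        have he : t + (w - 1 - t) = w - 1 := by omega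
        rw [he] at this
        omega
      have hw1' : z < pv π (w - 1) := by
        have := s2a (w-1) w (by omega) (by omega)
        rw [hpw] at this
        omega
      omega
    -- C4 : suffix is increasing: pv π (z+u) = u
    have C4 : ∀ u, 1 ≤ u → u ≤ w → pv π (z + u) = u := by
      have gvals : ∀ u, 1 ≤ u → u ≤ w → 1 ≤ pv π (z + u) ∧ pv π (z + u) ≤ w := by
        intro u h1 h2
        have hne : pv π (z + u) ≠ 0 := fun h => by
          have := finj (z + u) z (by omega) hzm (h.trans hpz.symm); omega
        exact ⟨by omega, C3 (z + u) (by omega) (by omega)⟩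
      have ginc : ∀ u u', 1 ≤ u → u < u' → u' ≤ w → pv π (z + u) < pv π (z + u') := by
        intro u u' hu huu' hu'w
        have hqi : pv π (pv π (w - u')) = pv π (z + u') := by
          rw [C2 (w - u') (by omega)]
          congr 1
          omega
        have hqj : pv π (pv π (w - u)) = pv π (z + u) := by
          rw [C2 (w - u) (by omega)]
          congr 1
          omega
        have hqw : pv π (pv π w) = 0 := by rw [hpw, hpz]
        have h1 : ¬(pv π (pv π w) < pv π (pv π (w - u')) ∧
            pv π (pv π (w - u')) < pv π (pv π (w - u))) := by
          intro hc
          exact nA3 hA3 (w - u') (w - u) w (by omega) (by omega) (by omega) hc.1 hc.2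
        rw [hqw, hqi, hqj] at h1
        have h2 := (gvals u' (by omega) hu'w).1
        have h3 : pv π (z + u') ≠ pv π (z + u) := fun h => by
          have := finj (z + u') (z + u) (by omega) (by omega) h; omega
        omega
      intro u h1 h2
      have hlow : u ≤ pv π (z + u) := by
        have := chain_inc (fun u => pv π (z + u)) 1 w ginc 1 (u - 1) (by omega) (by omega)
        have he : 1 + (u - 1) = u := by omega
        rw [he] at this
        have := (gvals 1 (by omega) (by omega)).1
        omega
      have hup : pv π (z + u) ≤ u := by
        have := chain_inc (fun u => pv π (z + u)) 1 w ginc u (w - u) (by omega) (by omega)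
        have he : u + (w - u) = w := by omega
        rw [he] at this
        have := (gvals w (by omega) (by omega)).2
        omega
      omega
    -- assemble
    refine ⟨z, Or.inl ⟨by omega, by omega⟩, ?_⟩
    intro t htm
    rcases (by omega : t < w ∨ (w ≤ t ∧ t < z) ∨ t = z ∨ z < t) with h | h | h | h
    · rw [if_pos (by omega)]
      exact C2 t h
    · rw [if_pos (by omega)]
      rw [C1 t h.1 h.2]
      omega
    · rw [h, if_neg (by omega), hpz]
      omega
    · rw [if_neg (by omega)]
      have h2 : t - z ≤ w := by omega
      have := C4 (t - z) (by omega) h2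
      have he : z + (t - z) = t := by omega
      rw [he] at this
      omega
----------------------------------------------------------------
-- wrapper of classification at the permutation level
----------------------------------------------------------------

lemma classify_perm {M : ℕ} (π : Equiv.Perm (Fin M)) (hm : 3 ≤ M) (hP : ClassP π)
    (hc1 : pv π (M-1) ≠ M-1) (hc2 : ¬(pv π (M-2) = M-1 ∧ pv π (M-1) = M-2)) :
    ∃ b, (M ≤ 2*b ∧ b ≤ M-2 ∨ b = M) ∧ π = Jperm b M := by
  obtain ⟨b, hb, hf⟩ := classify_s12 π hm hP hc1 hc2
  refine ⟨b, hb, ?_⟩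
  apply Equiv.ext
  intro x
  apply Fin.ext
  have h := hf x.val x.isLt
  rw [pv_apply] at h
  rw [Jperm_val]
  exact h

lemma appendTop_injective {m k : ℕ} (ρ : Equiv.Perm (Fin k)) :
    Function.Injective (fun σ : Equiv.Perm (Fin m) => appendTop σ ρ) := by
  intro σ σ' h
  apply Equiv.ext
  intro x
  have h2 := congrArg (fun e : Equiv.Perm (Fin (m+k)) => e (Fin.castAdd k x)) h
  simp only [appendTop_castAdd] at h2
  apply Fin.ext
  have h3 := congrArg Fin.val h2
  simpa using h3

lemma pv_appendTop_natAdd {m k : ℕ} (σ : Equiv.Perm (Fin m)) (ρ : Equiv.Perm (Fin k))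
    (y : Fin k) : pv (appendTop σ ρ) (m + y.val) = m + (ρ y).val := by
  have h : (⟨m + y.val, by have := y.isLt; omega⟩ : Fin (m+k)) = Fin.natAdd m y :=
    Fin.ext rfl
  rw [pv_eq _ (show m + y.val < m + k by have := y.isLt; omega), h, appendTop_natAdd]
  rfl

lemma card_cond1 (m : ℕ) :
    ((Finset.univ.filter
      (fun π : Equiv.Perm (Fin (m+2)) => ClassP π ∧ pv π (m+1) = m+1)).card
      = countC (m+1)) := by
  have himg : Finset.univ.filter
      (fun π : Equiv.Perm (Fin (m+2)) => ClassP π ∧ pv π (m+1) = m+1)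
      = (Finset.univ.filter (fun σ : Equiv.Perm (Fin (m+1)) => ClassP σ)).image
          (fun σ => appendTop σ (1 : Equiv.Perm (Fin 1))) := by
    ext π
    simp only [Finset.mem_filter, Finset.mem_image, Finset.mem_univ, true_and]
    constructor
    · rintro ⟨hP, hc⟩
      have hyp : ∀ y : Fin 1, π (Fin.natAdd (m+1) y) =
          Fin.natAdd (m+1) ((1 : Equiv.Perm (Fin 1)) y) := by
        intro y
        have hy : y = 0 := Subsingleton.elim y 0
        subst hy
        have h1 : (Fin.natAdd (m+1) (0 : Fin 1)) = (⟨m+1, by omega⟩ : Fin (m+2)) :=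
          Fin.ext rfl
        rw [pv_eq π (show m+1 < m+2 by omega)] at hc
        simp only [Equiv.Perm.one_apply]
        rw [h1]
        apply Fin.ext
        rw [hc]
      obtain ⟨σ, rfl⟩ := exists_appendTop (m := m+1) (k := 1) π (1 : Equiv.Perm (Fin 1)) hyp
      exact ⟨σ, (classP_appendTop σ 1 (by omega)).mp hP, rfl⟩
    · rintro ⟨σ, hσ, rfl⟩
      refine ⟨(classP_appendTop σ 1 (by omega)).mpr hσ, ?_⟩
      have h := pv_appendTop_natAdd σ (1 : Equiv.Perm (Fin 1)) 0
      simpa using h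
  rw [himg, Finset.card_image_of_injective _ (appendTop_injective _), countC]

lemma card_cond1_surj (m : ℕ) (π : Equiv.Perm (Fin (m+2))) (hP : ClassP π)
    (hc : pv π (m+1) = m+1) : True := trivial

lemma card_cond2 (m : ℕ) :
    ((Finset.univ.filter
      (fun π : Equiv.Perm (Fin (m+2)) => ClassP π ∧ pv π m = m+1 ∧ pv π (m+1) = m)).card
      = countC m) := by
  have himg : Finset.univ.filter
      (fun π : Equiv.Perm (Fin (m+2)) => ClassP π ∧ pv π m = m+1 ∧ pv π (m+1) = m)
      = (Finset.univ.filter (fun σ : Equiv.Perm (Fin m) => ClassP σ)).image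
          (fun σ => appendTop σ (Equiv.swap (0 : Fin 2) 1)) := by
    ext π
    simp only [Finset.mem_filter, Finset.mem_image, Finset.mem_univ, true_and]
    constructor
    · rintro ⟨hP, hc0, hc1⟩
      have hyp : ∀ y : Fin 2, π (Fin.natAdd m y) =
          Fin.natAdd m ((Equiv.swap (0 : Fin 2) 1) y) := by
        intro y
        have hy : y = 0 ∨ y = 1 := by
          have := y.isLt
          rcases (by omega : y.val = 0 ∨ y.val = 1) with h | h
          · exact Or.inl (Fin.ext h)
          · exact Or.inr (Fin.ext h)
        rcases hy with rfl | rfl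
        · have h1 : (Fin.natAdd m (0 : Fin 2)) = (⟨m, by omega⟩ : Fin (m+2)) :=
            Fin.ext rfl
          rw [pv_eq π (show m < m+2 by omega)] at hc0
          rw [h1, Equiv.swap_apply_left]
          apply Fin.ext
          rw [hc0]
          rfl
        · have h1 : (Fin.natAdd m (1 : Fin 2)) = (⟨m+1, by omega⟩ : Fin (m+2)) :=
            Fin.ext rfl
          rw [pv_eq π (show m+1 < m+2 by omega)] at hc1
          rw [h1, Equiv.swap_apply_right]
          apply Fin.ext
          rw [hc1]
          rfl
      obtain ⟨σ, rfl⟩ := exists_appendTop π (Equiv.swap (0 : Fin 2) 1) hyp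
      exact ⟨σ, (classP_appendTop σ _ (by omega)).mp hP, rfl⟩
    · rintro ⟨σ, hσ, rfl⟩
      refine ⟨(classP_appendTop σ _ (by omega)).mpr hσ, ?_, ?_⟩
      · have h := pv_appendTop_natAdd σ (Equiv.swap (0 : Fin 2) 1) 0
        rw [Equiv.swap_apply_left] at h
        simpa using h
      · have h := pv_appendTop_natAdd σ (Equiv.swap (0 : Fin 2) 1) 1
        rw [Equiv.swap_apply_right] at h
        simpa using h
  rw [himg, Finset.card_image_of_injective _ (appendTop_injective _), countC]

----------------------------------------------------------------
-- the exceptional family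
----------------------------------------------------------------

lemma pv_Jperm (b M t : ℕ) (ht : t < M) :
    pv (Jperm b M) t = if t < b then M - 1 - t else t - b := by
  rw [pv_eq _ ht]
  exact Jperm_val b M ⟨t, ht⟩

def T3 (M : ℕ) : Finset ℕ := insert M (Finset.Icc ((M+1)/2) (M-2))

lemma mem_T3 (M b : ℕ) : b ∈ T3 M ↔ b = M ∨ ((M+1)/2 ≤ b ∧ b ≤ M-2) := by
  rw [T3, Finset.mem_insert, Finset.mem_Icc]

lemma T3_card (M : ℕ) (h3 : 3 ≤ M) : (T3 M).card = M/2 := by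
  rw [T3, Finset.card_insert_of_notMem (by
    rw [Finset.mem_Icc]; omega), Nat.card_Icc]
  omega

lemma card_cond3 (m : ℕ) (hm : 1 ≤ m) :
    (Finset.univ.filter (fun π : Equiv.Perm (Fin (m+2)) => ClassP π ∧
      ¬(pv π (m+1) = m+1) ∧ ¬(pv π m = m+1 ∧ pv π (m+1) = m))).card = (m+2)/2 := by
  have himg : Finset.univ.filter (fun π : Equiv.Perm (Fin (m+2)) => ClassP π ∧
      ¬(pv π (m+1) = m+1) ∧ ¬(pv π m = m+1 ∧ pv π (m+1) = m))
      = (T3 (m+2)).image (fun b => Jperm b (m+2)) := by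
    ext π
    simp only [Finset.mem_filter, Finset.mem_image, Finset.mem_univ, true_and]
    constructor
    · rintro ⟨hP, h1, h2⟩
      have e1 : m + 2 - 1 = m + 1 := by omega
      have e2 : m + 2 - 2 = m := by omega
      obtain ⟨b, hb, rfl⟩ := classify_perm π (by omega) hP
        (by rw [e1]; exact h1) (by rw [e1, e2]; exact h2)
      refine ⟨b, ?_, rfl⟩
      rw [mem_T3]
      rcases hb with ⟨hb1, hb2⟩ | rfl
      · right; omega
      · left; rfl
    · rintro ⟨b, hb, rfl⟩
      rw [mem_T3] at hb
      have hcls : ClassP (Jperm b (m+2)) := Jperm_class b (m+2) (by rcases hb <;> omega)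
      refine ⟨hcls, ?_, ?_⟩
      · rw [pv_Jperm b (m+2) (m+1) (by omega)]
        rcases hb with rfl | ⟨hb1, hb2⟩ <;> (split_ifs <;> omega)
      · intro hc
        obtain ⟨hA, hB⟩ := hc
        rw [pv_Jperm b (m+2) m (by omega)] at hA
        rcases hb with rfl | ⟨hb1, hb2⟩ <;> (split_ifs at hA <;> omega)
  rw [himg, Finset.card_image_of_injOn, T3_card (m+2) (by omega)]
  intro b hb b' hb' heq
  simp only [Finset.mem_coe, mem_T3] at hb hb'
  have h2 := congrArg (fun e : Equiv.Perm (Fin (m+2)) => (e ⟨m+1, by omega⟩).val) heq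
  simp only [Jperm_val] at h2
  split_ifs at h2 <;> omega

----------------------------------------------------------------
-- the recurrence
----------------------------------------------------------------

lemma countC_rec (m : ℕ) (hm : 1 ≤ m) :
    countC (m+2) = countC (m+1) + countC m + (m+2)/2 := by
  classical
  have hsplit : (Finset.univ.filter (fun π : Equiv.Perm (Fin (m+2)) => ClassP π))
      = (Finset.univ.filter (fun π : Equiv.Perm (Fin (m+2)) =>
          ClassP π ∧ pv π (m+1) = m+1))
        ∪ ((Finset.univ.filter (fun π : Equiv.Perm (Fin (m+2)) =>
            ClassP π ∧ pv π m = m+1 ∧ pv π (m+1) = m))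
        ∪ (Finset.univ.filter (fun π : Equiv.Perm (Fin (m+2)) => ClassP π ∧
            ¬(pv π (m+1) = m+1) ∧ ¬(pv π m = m+1 ∧ pv π (m+1) = m)))) := by
    ext π
    simp only [Finset.mem_filter, Finset.mem_union, Finset.mem_univ, true_and]
    by_cases hc1 : pv π (m+1) = m+1 <;> by_cases hc2 : pv π m = m+1 ∧ pv π (m+1) = m <;>
      tauto
  have hd1 : Disjoint
      (Finset.univ.filter (fun π : Equiv.Perm (Fin (m+2)) =>
        ClassP π ∧ pv π m = m+1 ∧ pv π (m+1) = m))
      (Finset.univ.filter (fun π : Equiv.Perm (Fin (m+2)) => ClassP π ∧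
        ¬(pv π (m+1) = m+1) ∧ ¬(pv π m = m+1 ∧ pv π (m+1) = m))) := by
    rw [Finset.disjoint_left]
    intro π h1 h2
    rw [Finset.mem_filter] at h1 h2
    exact h2.2.2.2 h1.2.2
  have hd2 : Disjoint
      (Finset.univ.filter (fun π : Equiv.Perm (Fin (m+2)) =>
        ClassP π ∧ pv π (m+1) = m+1))
      ((Finset.univ.filter (fun π : Equiv.Perm (Fin (m+2)) =>
          ClassP π ∧ pv π m = m+1 ∧ pv π (m+1) = m))
      ∪ (Finset.univ.filter (fun π : Equiv.Perm (Fin (m+2)) => ClassP π ∧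
          ¬(pv π (m+1) = m+1) ∧ ¬(pv π m = m+1 ∧ pv π (m+1) = m)))) := by
    rw [Finset.disjoint_left]
    intro π h1 h2
    rw [Finset.mem_filter] at h1
    rw [Finset.mem_union, Finset.mem_filter, Finset.mem_filter] at h2
    rcases h2 with h2 | h2
    · have := h1.2.2
      have := h2.2.2.2
      omega
    · exact h2.2.2.1 h1.2.2
  rw [countC, hsplit, Finset.card_union_of_disjoint hd2, Finset.card_union_of_disjoint hd1,
    card_cond1, card_cond2, card_cond3 m hm]
  omega

----------------------------------------------------------------
-- arithmetic conclusion
----------------------------------------------------------------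

lemma countC_formula : ∀ n : ℕ, 1 ≤ n →
    (countC n : ℤ) = (lucas (n+1) : ℤ) - (((n+1)/2 : ℕ) : ℤ) - 1 := by
  intro n
  induction n using Nat.strong_induction_on with
  | _ n ih =>
    intro hn
    rcases (by omega : n = 1 ∨ n = 2 ∨ 3 ≤ n) with rfl | rfl | h3
    · rw [countC_one]
      norm_num [lucas]
    · rw [countC_two]
      norm_num [lucas]
    · obtain ⟨m, rfl⟩ : ∃ m, n = m + 2 := ⟨n-2, by omega⟩
      have hm : 1 ≤ m := by omega
      rw [countC_rec m hm]
      have ih1 := ih (m+1) (by omega) (by omega)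
      have ih2 := ih m (by omega) hm
      have hlnat : lucas (m+2+1) = lucas (m+1+1) + lucas (m+1) := rfl
      omega

lemma ceil_half (n : ℕ) : ⌈(n : ℚ) / 2⌉ = (((n+1)/2 : ℕ) : ℤ) := by
  rw [Int.ceil_eq_iff]
  constructor
  · rw [lt_div_iff₀ (by norm_num : (0:ℚ) < 2)]
    have h : (((n+1)/2 : ℕ) : ℤ) * 2 - 2 < (n : ℤ) := by omega
    have hq : (((((n+1)/2 : ℕ) : ℤ) : ℚ) - 1) * 2 = ((((n+1)/2 : ℕ) : ℤ) * 2 - 2 : ℤ) := by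
      push_cast
      ring
    rw [hq]
    exact_mod_cast h
  · rw [div_le_iff₀ (by norm_num : (0:ℚ) < 2)]
    have h : (n : ℤ) ≤ (((n+1)/2 : ℕ) : ℤ) * 2 := by omega
    exact_mod_cast h

theorem stmt12 (n : ℕ) (hn : 1 ≤ n) :
    (Nat.card {π : Equiv.Perm (Fin n) // Avoids231 π ∧ Avoids1432 π ∧ Avoids231 (π * π)} : ℤ) =
      (lucas (n + 1) : ℤ) - ⌈(n : ℚ) / 2⌉ - 1 := by
  have h1 : Nat.card {π : Equiv.Perm (Fin n) //
      Avoids231 π ∧ Avoids1432 π ∧ Avoids231 (π * π)} = countC n := by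
    rw [Nat.card_eq_fintype_card, Fintype.card_subtype, countC]
    have he : (Finset.univ.filter
        (fun x : Equiv.Perm (Fin n) => Avoids231 x ∧ Avoids1432 x ∧ Avoids231 (x * x)))
        = Finset.univ.filter (fun π : Equiv.Perm (Fin n) => ClassP π) := by
      apply Finset.filter_congr
      intro x _
      exact Iff.rfl
    rw [he]
  rw [h1, countC_formula n hn, ceil_half n]
end
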